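/- arXiv:2003.02557 — 9 statements merged into one kernel-verified Lean document; each statement's English description precedes it below -/
import Mathlib

section
/- Let c : ℍ → ℂ be a continuous function. Suppose there exist E₁, E₂ ∈ SL(2,ℝ) such that E₁ is an elliptic matrix of infinite order with fixed point a ∈ ℍ, the point a is not a fixed point of E₂ (i.e. E₂·a ≠ a), and c(E₁·z) = c(z) and c(E₂·z) = c(z) for all z ∈ ℍ. Then c is constant on ℍ. -/
/-!
In the Cayley coordinate of the disc centred at `a`, an elliptic element fixing `a` acts as a
rotation, and infinite order makes the rotation irrational. Its orbits are then dense in the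
hyperbolic circles about `a`, so a continuous invariant function is constant on each of them.
The conjugate `E₂⁻¹ E₁ E₂` is again elliptic of infinite order, with fixed point
`b = E₂⁻¹ • a ≠ a`, so `c` is also constant on the circles about `b`. The circle of radius `s`
about `b` meets precisely the circles about `a` whose radii lie in
`[|d(a, b) - s|, d(a, b) + s]`, and these intervals overlap enough to link every radius to `0`.
-/

open ComplexConjugate Real
open scoped Complex.UnitDisc

section zpow

variable {G H X Y : Type*} [Group G] [Group H] [MulAction G X] [MulAction H Y]

lemma apply_zpow_smul_of_apply_smul {f : X → Y} {g : G} {h : H}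
    (hf : ∀ x, f (g • x) = h • f x) (n : ℤ) (x : X) : f (g ^ n • x) = h ^ n • f x := by
  have hf_inv (x : X) : f (g⁻¹ • x) = h⁻¹ • f x := by
    rw [eq_inv_smul_iff, ← hf, smul_inv_smul]
  induction n using Int.induction_on generalizing x with
  | zero => simp
  | succ n ih => rw [zpow_add_one, zpow_add_one, mul_smul, ih, hf, mul_smul]
  | pred n ih => rw [zpow_sub_one, zpow_sub_one, mul_smul, ih, hf_inv, mul_smul]

lemma apply_zpow_smul_of_apply_smul_eq {β : Type*} {f : X → β} {g : G}
    (hf : ∀ x, f (g • x) = f x) (n : ℤ) (x : X) : f (g ^ n • x) = f x := by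
  have hf_inv (x : X) : f (g⁻¹ • x) = f x := by rw [← hf, smul_inv_smul]
  induction n using Int.induction_on generalizing x with
  | zero => simp
  | succ n ih => rw [zpow_add_one, mul_smul, ih, hf]
  | pred n ih => rw [zpow_sub_one, mul_smul, ih, hf_inv]

end zpow

lemma Circle.denseRange_zpow {u : Circle} (hu : ¬IsOfFinOrder u) :
    DenseRange (u ^ · : ℤ → Circle) := by
  have : Fact ((0 : ℝ) < 1) := ⟨one_pos⟩
  let e := AddCircle.homeomorphCircle (T := 1) one_ne_zero
  obtain ⟨x, rfl⟩ := e.surjective u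
  simp only [e, AddCircle.homeomorphCircle_apply] at hu ⊢
  have hx : addOrderOf x = 0 := addOrderOf_eq_zero_iff'.2 fun n hn hnx =>
    hu (isOfFinOrder_iff_pow_eq_one.2
      ⟨n, hn, by rw [← AddCircle.toCircle_nsmul, hnx, AddCircle.toCircle_zero]⟩)
  have hd := e.surjective.denseRange.comp (AddCircle.denseRange_zsmul_iff.2 hx) e.continuous
  convert hd using 1
  ext1 n
  simp [e, AddCircle.homeomorphCircle_apply, AddCircle.toCircle_zsmul]

namespace Complex.UnitDisc

instance : ContinuousSMul Circle 𝔻 :=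
  ⟨isEmbedding_coe.continuous_iff.2 <| by
    simp only [Function.comp_def, coe_circle_smul]
    fun_prop⟩

lemma exists_circle_smul_eq {v w : 𝔻} (h : ‖(v : ℂ)‖ = ‖(w : ℂ)‖) : ∃ ζ : Circle, ζ • v = w := by
  by_cases hv : (v : ℂ) = 0
  · refine ⟨1, ?_⟩
    rw [one_smul, ← coe_inj, hv, eq_comm, ← norm_eq_zero, ← h, hv, norm_zero]
  · have hwv : ‖(w : ℂ) / v‖ = 1 := by rw [norm_div, h, div_self (by rwa [← h, norm_ne_zero_iff])]
    refine ⟨⟨w / v, by simpa [Submonoid.unitSphere] using hwv⟩, coe_injective ?_⟩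
    exact (coe_circle_smul _ _).trans (div_mul_cancel₀ _ hv)

end Complex.UnitDisc

lemma Real.tanh_sub (x y : ℝ) : tanh (x - y) = (tanh x - tanh y) / (1 - tanh x * tanh y) := by
  simp only [tanh_eq_sinh_div_cosh, sinh_sub, cosh_sub]
  field_simp

lemma Real.tanh_abs (x : ℝ) : tanh |x| = |tanh x| := by
  have h (y : ℝ) (hy : 0 ≤ y) : 0 ≤ tanh y := by
    rw [tanh_eq_sinh_div_cosh]; exact div_nonneg (sinh_nonneg_iff.2 hy) (cosh_pos y).le
  rcases le_total 0 x with hx | hx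
  · rw [abs_of_nonneg hx, abs_of_nonneg (h x hx)]
  · rw [abs_of_nonpos hx, tanh_neg, abs_of_nonpos (by simpa [tanh_neg] using h (-x) (by linarith))]

lemma div_sub_div_of_det_eq_one {a b c d z w : ℂ} (hdet : a * d - b * c = 1)
    (hz : c * z + d ≠ 0) (hw : c * w + d ≠ 0) :
    (a * z + b) / (c * z + d) - (a * w + b) / (c * w + d) =
      (z - w) / ((c * z + d) * (c * w + d)) := by
  rw [div_sub_div _ _ hz hw]
  congr 1
  linear_combination (z - w) * hdet

theorem Metric.apply_eq_apply_of_constant_on_spheres {X β : Type*} [PseudoMetricSpace X]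
    {f : X → β} {a b : X} (hab : 0 < dist a b) (ha : ∀ z w, dist z a = dist w a → f z = f w)
    (hb : ∀ z w, dist z b = dist w b → f z = f w)
    (hreal : ∀ s r, 0 ≤ s → |dist a b - s| ≤ r → r ≤ dist a b + s →
      ∃ z, dist z b = s ∧ dist z a = r)
    (z w : X) : f z = f w := by
  set D := dist a b
  -- Both radii lie in `[|D - s|, D + s]` for `s = D + min`, so both spheres about `a` meet the
  -- sphere of radius `s` about `b`.
  have step (z w : X) (h : |dist z a - dist w a| ≤ 2 * D) : f z = f w := by
    set m := min (dist z a) (dist w a)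
    have hm : 0 ≤ m := le_min dist_nonneg dist_nonneg
    have hDs : |D - (D + m)| = m := by rw [sub_add_cancel_left, abs_neg, abs_of_nonneg hm]
    rw [abs_le] at h
    obtain ⟨y, hyb, hya⟩ := hreal (D + m) (dist z a) (by positivity)
      (hDs.trans_le (min_le_left _ _))
      (by cases min_cases (dist z a) (dist w a) <;> linarith)
    obtain ⟨y', hy'b, hy'a⟩ := hreal (D + m) (dist w a) (by positivity)
      (hDs.trans_le (min_le_right _ _))
      (by cases min_cases (dist z a) (dist w a) <;> linarith)
    exact (ha z y hya.symm).trans ((hb y y' (hyb.trans hy'b.symm)).trans (ha y' w hy'a))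
  have near_a (n : ℕ) (z : X) (hz : dist z a ≤ n * D) : f z = f a := by
    induction n generalizing z with
    | zero => exact ha z a (by rw [dist_self]; exact le_antisymm (by simpa using hz) dist_nonneg)
    | succ n ih =>
      rcases le_total (dist z a) (n * D) with h | h
      · exact ih z h
      obtain ⟨y, -, hya⟩ := hreal (D + n * D) (n * D) (by positivity)
        (by rw [sub_add_cancel_left, abs_neg, abs_of_nonneg (by positivity)]) (by linarith)
      refine (step z y ?_).trans (ih y hya.le)
      rw [hya, abs_le]
      push_cast at hz
      constructor <;> linarith
  obtain ⟨n, hn⟩ := exists_nat_ge (dist z a / D)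
  obtain ⟨n', hn'⟩ := exists_nat_ge (dist w a / D)
  rw [near_a n z ((div_le_iff₀ hab).1 hn), near_a n' w ((div_le_iff₀ hab).1 hn')]

open Matrix MatrixGroups UpperHalfPlane

namespace UpperHalfPlane

lemma coe_sub_conj_ne_zero (p z : ℍ) : (z : ℂ) - conj (p : ℂ) ≠ 0 := by
  refine fun h => (add_pos z.im_pos p.im_pos).ne' ?_
  simpa using congrArg Complex.im h

lemma norm_sub_div_sub_conj (p z : ℍ) :
    ‖((z : ℂ) - p) / (z - conj (p : ℂ))‖ = tanh (dist z p / 2) := by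
  rw [tanh_half_dist, norm_div, Complex.dist_eq, Complex.dist_eq]

lemma im_div_one_sub_pos (p : ℍ) (v : 𝔻) : 0 < (((p : ℂ) - v * conj (p : ℂ)) / (1 - v)).im := by
  have hv := v.normSq_lt_one
  have h1 : 0 < Complex.normSq (1 - (v : ℂ)) :=
    Complex.normSq_pos.2 (sub_ne_zero.2 v.coe_ne_one.symm)
  have key : (((p : ℂ) - v * conj (p : ℂ)) / (1 - v)).im
      = p.im * (1 - Complex.normSq (v : ℂ)) / Complex.normSq (1 - (v : ℂ)) := by
    rw [Complex.div_im]
    simp only [Complex.sub_re, Complex.sub_im, Complex.mul_re, Complex.mul_im, Complex.one_re,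
      Complex.one_im, Complex.conj_re, Complex.conj_im, Complex.normSq_apply, coe_im]
    ring
  rw [key]
  have := p.im_pos
  have : 0 < 1 - Complex.normSq (v : ℂ) := by linarith
  positivity

noncomputable def cayley (p : ℍ) : ℍ ≃ₜ 𝔻 where
  toFun z := .mk (((z : ℂ) - p) / (z - conj (p : ℂ)))
    (by rw [norm_sub_div_sub_conj]; exact tanh_lt_one _)
  invFun v := ⟨((p : ℂ) - v * conj (p : ℂ)) / (1 - v), im_div_one_sub_pos p v⟩
  left_inv z := by
    have h1 := coe_sub_conj_ne_zero p z
    have h2 := coe_sub_conj_ne_zero p p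
    ext
    simp only [Complex.UnitDisc.coe_mk]
    rw [div_eq_iff]
    · field_simp
      ring
    · rw [one_sub_div h1]
      exact div_ne_zero (by simpa using h2) h1
  right_inv v := by
    have h1 : (1 : ℂ) - v ≠ 0 := sub_ne_zero.2 v.coe_ne_one.symm
    ext
    simp only [Complex.UnitDisc.coe_mk]
    rw [div_eq_iff (coe_sub_conj_ne_zero p ⟨_, im_div_one_sub_pos p v⟩)]
    field_simp
    ring
  continuous_toFun := by
    refine Complex.UnitDisc.isEmbedding_coe.continuous_iff.2 ?_
    exact Continuous.div (by fun_prop) (by fun_prop) (coe_sub_conj_ne_zero p)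
  continuous_invFun := by
    refine isEmbedding_coe.continuous_iff.2 ?_
    have := Complex.UnitDisc.continuous_coe
    exact Continuous.div (by fun_prop) (by fun_prop) fun v => sub_ne_zero.2 v.coe_ne_one.symm

@[simp]
lemma coe_cayley (p z : ℍ) : (cayley p z : ℂ) = ((z : ℂ) - p) / (z - conj (p : ℂ)) := rfl

lemma coe_cayley_self (p : ℍ) : (cayley p p : ℂ) = 0 := by simp

lemma norm_cayley (p z : ℍ) : ‖(cayley p z : ℂ)‖ = tanh (dist z p / 2) :=
  norm_sub_div_sub_conj p z

lemma coe_cayley_smul (g : SL(2, ℝ)) (p z : ℍ) :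
    (cayley (g • p) (g • z) : ℂ) =
      conj (((g 1 0 : ℝ) : ℂ) * p + (g 1 1 : ℝ)) / (((g 1 0 : ℝ) : ℂ) * p + (g 1 1 : ℝ)) *
        cayley p z := by
  have hdet : ((g 0 0 : ℝ) : ℂ) * (g 1 1 : ℝ) - (g 0 1 : ℝ) * (g 1 0 : ℝ) = 1 := by
    have := g.det_coe; rw [Matrix.det_fin_two] at this; exact_mod_cast this
  have hj (w : ℍ) : ((g 1 0 : ℝ) : ℂ) * w + (g 1 1 : ℝ) ≠ 0 := by
    simpa [denom] using denom_ne_zero (Matrix.SpecialLinearGroup.mapGL ℝ g) w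
  have hj' (w : ℍ) : (w : ℂ) * (g 1 0 : ℝ) + (g 1 1 : ℝ) ≠ 0 := by rw [mul_comm]; exact hj w
  have hpbar : ((g 1 0 : ℝ) : ℂ) * conj (p : ℂ) + (g 1 1 : ℝ) ≠ 0 := by
    simpa using (map_ne_zero (starRingEnd ℂ)).2 (hj p)
  have hzp := coe_sub_conj_ne_zero p z
  simp only [coe_cayley, coe_specialLinearGroup_apply, Algebra.algebraMap_self, RingHom.id_apply,
    map_div₀, map_add, map_mul, Complex.conj_ofReal]
  rw [div_sub_div_of_det_eq_one hdet (hj z) (hj p),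
    div_sub_div_of_det_eq_one hdet (hj z) hpbar]
  field_simp [hj' z, hj' p]

lemma exists_cayley_smul_eq_circle_smul {g : SL(2, ℝ)} {p : ℍ} (hp : g • p = p) :
    ∃ u : Circle, ∀ z, cayley p (g • z) = u • cayley p z := by
  refine ⟨Circle.ofConjDivSelf _ (denom_ne_zero (Matrix.SpecialLinearGroup.mapGL ℝ g) p),
    fun z => Complex.UnitDisc.coe_injective ?_⟩
  conv_lhs => rw [← hp]
  rw [coe_cayley_smul, Complex.UnitDisc.coe_circle_smul]
  simp [denom]

lemma sq_eq_one_of_forall_smul_eq {g : SL(2, ℝ)} (h : ∀ z : ℍ, g • z = z) : g ^ 2 = 1 := by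
  have hGL : Matrix.SpecialLinearGroup.mapGL ℝ g ∈ Subgroup.center (GL (Fin 2) ℝ) :=
    forall_smul_eq_self_iff_mem_center.1 fun z => by rw [← MulAction.compHom_smul_def]; exact h z
  have hSL : g ∈ Subgroup.center SL(2, ℝ) := Subgroup.mem_center_iff.2 fun k =>
    Matrix.SpecialLinearGroup.mapGL_injective
      (by simp only [map_mul]; exact Subgroup.mem_center_iff.1 hGL _)
  obtain ⟨r, hr, hg⟩ := Matrix.SpecialLinearGroup.mem_center_iff.1 hSL
  rw [Fintype.card_fin] at hr
  ext i j
  rw [Matrix.SpecialLinearGroup.coe_pow, ← hg, ← map_pow, hr, map_one]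
  rfl

lemma not_isOfFinOrder_of_cayley_smul_eq {g : SL(2, ℝ)} {p : ℍ} {u : Circle}
    (hg : ¬IsOfFinOrder g) (hu : ∀ z, cayley p (g • z) = u • cayley p z) : ¬IsOfFinOrder u := by
  rw [isOfFinOrder_iff_pow_eq_one] at hg ⊢
  rintro ⟨n, hn, hun⟩
  refine hg ⟨n * 2, by positivity, ?_⟩
  rw [pow_mul]
  refine sq_eq_one_of_forall_smul_eq fun z => (cayley p).injective ?_
  rw [← zpow_natCast, apply_zpow_smul_of_apply_smul hu, zpow_natCast, hun, one_smul]

theorem apply_eq_apply_of_dist_eq {β : Type*} [TopologicalSpace β] [T2Space β] {f : ℍ → β}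
    (hf : Continuous f) {g : SL(2, ℝ)} {p : ℍ} (hp : g • p = p) (hg : ¬IsOfFinOrder g)
    (hfg : ∀ z, f (g • z) = f z) {z w : ℍ} (hzw : dist z p = dist w p) : f z = f w := by
  obtain ⟨u, hu⟩ := exists_cayley_smul_eq_circle_smul hp
  obtain ⟨ζ, hζ⟩ := Complex.UnitDisc.exists_circle_smul_eq (v := cayley p z) (w := cayley p w)
    (by rw [norm_cayley, norm_cayley, hzw])
  let F : Circle → β := fun ξ => f ((cayley p).symm (ξ • cayley p z))
  have hF : Continuous F :=
    hf.comp ((cayley p).symm.continuous.comp (continuous_id.smul continuous_const))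
  have hFu : F ∘ (u ^ · : ℤ → Circle) = (fun _ => f z) ∘ (u ^ · : ℤ → Circle) := by
    ext n
    simp only [Function.comp_apply, F, ← apply_zpow_smul_of_apply_smul hu,
      Homeomorph.symm_apply_apply, apply_zpow_smul_of_apply_smul_eq hfg]
  have := congrFun ((Circle.denseRange_zpow (not_isOfFinOrder_of_cayley_smul_eq hg hu)).equalizer
    hF continuous_const hFu) ζ
  simpa [F, hζ] using this.symm

lemma norm_cayley_eq_norm_div (a b z : ℍ) :
    ‖(cayley a z : ℂ)‖ =
      ‖(cayley b z : ℂ) - cayley b a‖ / ‖1 - conj (cayley b a : ℂ) * cayley b z‖ := by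
  have hzb := coe_sub_conj_ne_zero b z
  have hab := coe_sub_conj_ne_zero b a
  have hba : conj (a : ℂ) - b ≠ 0 := by
    simpa using (map_ne_zero (starRingEnd ℂ)).2 hab
  have hbb := coe_sub_conj_ne_zero b b
  have hza := coe_sub_conj_ne_zero a z
  have hnum : (cayley b z : ℂ) - cayley b a =
      (b - conj (b : ℂ)) * (z - a) / ((z - conj (b : ℂ)) * (a - conj (b : ℂ))) := by
    simp only [coe_cayley]
    field_simp
    ring
  have hden : 1 - conj (cayley b a : ℂ) * cayley b z =
      (b - conj (b : ℂ)) * (conj (a : ℂ) - z) / ((conj (a : ℂ) - b) * (z - conj (b : ℂ))) := by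
    simp only [coe_cayley, map_div₀, map_sub, Complex.conj_conj]
    field_simp
    ring
  have hconj : ‖conj (a : ℂ) - b‖ = ‖(a : ℂ) - conj (b : ℂ)‖ := by
    rw [← Complex.norm_conj]; simp
  rw [hnum, hden, coe_cayley]
  simp only [norm_div, norm_mul, hconj, norm_sub_rev (conj (a : ℂ)) z]
  have : ‖(b : ℂ) - conj (b : ℂ)‖ ≠ 0 := norm_ne_zero_iff.2 (by simpa using hbb)
  field_simp [norm_ne_zero_iff.2 hzb, norm_ne_zero_iff.2 hab, norm_ne_zero_iff.2 hza]

/-- Points whose Cayley coordinate about `b` is a real multiple of that of `a` lie on the geodesic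
through `a` and `b`, at signed distance `2 * σ` from `b`. -/
lemma dist_eq_abs_of_coe_cayley_eq {a b z : ℍ} (hab : a ≠ b) {σ : ℝ}
    (hz : (cayley b z : ℂ) = (tanh σ / ‖(cayley b a : ℂ)‖ : ℝ) * cayley b a) :
    dist z a = |2 * σ - dist a b| := by
  set α : ℂ := (cayley b a : ℂ)
  set k := ‖α‖ with hk_def
  have hk : k = tanh (dist a b / 2) := norm_cayley b a
  have hα : α ≠ 0 := by
    rw [← coe_cayley_self b]
    exact fun h => hab ((cayley b).injective (Complex.UnitDisc.coe_injective h))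
  have hk0 : 0 < k := norm_pos_iff.2 hα
  have hnum : ‖(cayley b z : ℂ) - α‖ = |tanh σ - k| := by
    rw [hz, ← sub_one_mul, norm_mul, ← Complex.ofReal_one, ← Complex.ofReal_sub,
      Complex.norm_real, Real.norm_eq_abs, ← hk_def, div_sub_one hk0.ne', abs_div,
      abs_of_pos hk0, div_mul_cancel₀ _ hk0.ne']
  have hden : ‖1 - conj α * cayley b z‖ = |1 - tanh σ * k| := by
    rw [hz, mul_left_comm, Complex.conj_mul', ← hk_def,
      show (1 : ℂ) - ((tanh σ / k : ℝ) : ℂ) * (k : ℂ) ^ 2 = ((1 - tanh σ * k : ℝ) : ℂ) by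
        push_cast; field_simp, Complex.norm_real, Real.norm_eq_abs]
  have h2 : |2 * σ - dist a b| / 2 = |σ - dist a b / 2| := by
    rw [← abs_two, ← abs_div, abs_two]; ring_nf
  rw [← div_left_inj' (two_ne_zero' ℝ), h2]
  apply tanh_injective
  rw [← norm_cayley, norm_cayley_eq_norm_div a b z, hnum, hden, tanh_abs, tanh_sub, ← hk, abs_div]

theorem exists_dist_eq_and_dist_eq {a b : ℍ} (hab : a ≠ b) {s r : ℝ} (hs : 0 ≤ s)
    (hr₁ : |dist a b - s| ≤ r) (hr₂ : r ≤ dist a b + s) : ∃ z, dist z b = s ∧ dist z a = r := by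
  set α : ℂ := (cayley b a : ℂ)
  have hα : α ≠ 0 := by
    rw [← coe_cayley_self b]
    exact fun h => hab ((cayley b).injective (Complex.UnitDisc.coe_injective h))
  have hk0 : 0 < ‖α‖ := norm_pos_iff.2 hα
  have ht : |tanh (s / 2)| = tanh (s / 2) := by rw [← tanh_abs, abs_of_nonneg (by positivity)]
  have hv₀ : ‖((tanh (s / 2) / ‖α‖ : ℝ) : ℂ) * α‖ = tanh (s / 2) := by
    rw [norm_mul, Complex.norm_real, Real.norm_eq_abs, abs_div, abs_norm, ht,
      div_mul_cancel₀ _ hk0.ne']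
  let v₀ : 𝔻 := .mk _ (hv₀.trans_lt (tanh_lt_one _))
  -- `γ` runs along the circle of radius `s` about `b`, from the point of the geodesic through
  -- `a` nearest to `a` (`θ = 0`) to the farthest one (`θ = π`).
  let γ : ℝ → ℍ := fun θ => (cayley b).symm (Circle.exp θ • v₀)
  have hγ (θ : ℝ) : (cayley b (γ θ) : ℂ) = Complex.exp (θ * Complex.I) * v₀ := by
    simp [γ, Complex.UnitDisc.coe_circle_smul]
  have hγb (θ : ℝ) : dist (γ θ) b = s := by
    rw [← div_left_inj' (two_ne_zero' ℝ)]
    apply tanh_injective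
    rw [← norm_cayley, hγ, norm_mul, Complex.norm_exp_ofReal_mul_I, one_mul]
    exact hv₀
  have hcont : Continuous fun θ => dist (γ θ) a :=
    ((cayley b).symm.continuous.comp
      ((Circle.exp.continuous).smul continuous_const)).dist continuous_const
  have h0 : dist (γ 0) a = |dist a b - s| := by
    rw [dist_eq_abs_of_coe_cayley_eq hab (σ := s / 2)
      (by rw [hγ, Complex.ofReal_zero, zero_mul, Complex.exp_zero, one_mul]; rfl), abs_sub_comm]
    ring_nf
  have hπ : dist (γ π) a = dist a b + s := by
    rw [dist_eq_abs_of_coe_cayley_eq hab (σ := -(s / 2))]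
    · rw [abs_of_nonpos (by linarith [dist_nonneg (x := a) (y := b)])]
      ring
    · rw [hγ, Complex.exp_pi_mul_I, tanh_neg, neg_div, Complex.ofReal_neg, neg_mul, neg_mul,
        one_mul]
      rfl
  obtain ⟨θ, -, hθ⟩ := intermediate_value_Icc pi_pos.le hcont.continuousOn
    ⟨h0.symm ▸ hr₁, hπ.symm ▸ hr₂⟩
  exact ⟨γ θ, hγb θ, hθ⟩

end UpperHalfPlane

theorem two_circles_lemma_general (c : ℍ → ℂ) (hc : Continuous c)
    (E₁ E₂ : SL(2, ℝ)) (a : ℍ)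
    (hfix : E₁ • a = a)
    (hinf : ∀ n : ℕ, 0 < n → E₁ ^ n ≠ 1)
    (hE₂ : E₂ • a ≠ a)
    (h1 : ∀ z : ℍ, c (E₁ • z) = c z)
    (h2 : ∀ z : ℍ, c (E₂ • z) = c z) :
    ∀ z w : ℍ, c z = c w := by
  have hE₁ : ¬IsOfFinOrder E₁ := fun h => by
    obtain ⟨n, hn, hn1⟩ := isOfFinOrder_iff_pow_eq_one.1 h
    exact hinf n hn hn1
  set b := E₂⁻¹ • a
  set E := MulAut.conj E₂⁻¹ E₁
  have hab : a ≠ b := fun h => hE₂ (by nth_rw 1 [h]; exact smul_inv_smul E₂ a)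
  have hEb : E • b = b := by simp [E, b, MulAut.conj_apply, mul_smul, hfix]
  have hE : ¬IsOfFinOrder E :=
    (Function.Injective.isOfFinOrder_iff (f := (MulAut.conj E₂⁻¹).toMonoidHom)
      (MulAut.conj E₂⁻¹).injective).not.2 hE₁
  have hcE (z : ℍ) : c (E • z) = c z := by
    simp only [E, MulAut.conj_apply, inv_inv, mul_smul]
    rw [← h2, smul_inv_smul, h1, h2]
  exact Metric.apply_eq_apply_of_constant_on_spheres (dist_pos.2 hab)
    (fun z w => apply_eq_apply_of_dist_eq hc hfix hE₁ h1)
    (fun z w => apply_eq_apply_of_dist_eq hc hEb hE hcE)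
    (fun s r hs => exists_dist_eq_and_dist_eq hab hs)

/-- **Two circles lemma.** If a continuous function on the upper half-plane is invariant
under an elliptic matrix `E₁` of infinite order with fixed point `a`, and under a
matrix `E₂` not fixing `a`, then it is constant. -/
theorem two_circles_lemma (c : ℍ → ℂ) (hc : Continuous c)
    (E₁ E₂ : SL(2, ℝ)) (a : ℍ)
    (hfix : E₁ • a = a)
    (huniq : ∀ z : ℍ, E₁ • z = z → z = a)
    (hinf : ∀ n : ℕ, 0 < n → E₁ ^ n ≠ 1)
    (hE₂ : E₂ • a ≠ a)
    (h1 : ∀ z : ℍ, c (E₁ • z) = c z)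
    (h2 : ∀ z : ℍ, c (E₂ • z) = c z) :
    ∀ z w : ℍ, c z = c w :=
  two_circles_lemma_general c hc E₁ E₂ a hfix hinf hE₂ h1 h2
end

section
/- Let c : ℍ → ℂ be a continuous function. If there exists an elliptic matrix E = [[α,β],[γ,δ]] ∈ SL(2,ℝ) of infinite order such that exp(−i·arg(γz + δ)) · c(E·z) = c(z) for all z ∈ ℍ (i.e. c|₁E = c for the weight-1 action), then c = 0. -/
/-! The weight-one stabilizer of a continuous `c` is a closed subgroup of `SL(2, ℝ)`. Writing
`tr E = 2 cos θ` for the elliptic `E`, its powers are `E ^ n = ρ (n θ)` for a continuous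
`2π`-periodic curve `ρ` with `ρ π = -1`; infinite order makes `θ / 2π` irrational, so the `n θ`
are dense modulo `2π` and `-1` lies in the closure of the powers of `E`. Hence `-1` stabilizes
`c`; but `-1` acts trivially on `ℍ` with automorphy factor `-1`, so `c = -c`. -/

open Matrix MatrixGroups UpperHalfPlane Real Topology

namespace Matrix.SpecialLinearGroup

lemma coe_mul_self_fin_two (g : SL(2, ℝ)) :
    (g : Matrix (Fin 2) (Fin 2) ℝ) * g =
      trace (g : Matrix (Fin 2) (Fin 2) ℝ) • (g : Matrix (Fin 2) (Fin 2) ℝ) - 1 := by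
  have hdet := g.det_coe
  rw [det_fin_two] at hdet
  ext i j
  fin_cases i <;> fin_cases j <;> simp [mul_apply, trace_fin_two] <;> linarith

/-- By Cayley–Hamilton, `g ^ n = (sin (n θ) / sin θ) • g - (sin ((n - 1) θ) / sin θ) • 1` when
`tr g = 2 cos θ`; this curve interpolates these matrices in the angle `t = n θ`. -/
noncomputable def rotationCurve (g : SL(2, ℝ)) (θ t : ℝ) : Matrix (Fin 2) (Fin 2) ℝ :=
  (sin t / sin θ) • (g : Matrix (Fin 2) (Fin 2) ℝ) - (sin (t - θ) / sin θ) • 1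

variable {g : SL(2, ℝ)} {θ : ℝ}

lemma continuous_rotationCurve : Continuous (rotationCurve g θ) := by
  unfold rotationCurve
  fun_prop

lemma rotationCurve_add_two_pi_mul_int (t : ℝ) (k : ℤ) :
    rotationCurve g θ (t + k * (2 * π)) = rotationCurve g θ t := by
  simp only [rotationCurve, add_sub_right_comm, sin_add_int_mul_two_pi]

lemma rotationCurve_zero (hs : sin θ ≠ 0) : rotationCurve g θ 0 = 1 := by
  simp [rotationCurve, hs]

lemma rotationCurve_pi (hs : sin θ ≠ 0) : rotationCurve g θ π = -1 := by
  simp [rotationCurve, sin_pi_sub, hs]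

lemma rotationCurve_add (hθ : trace (g : Matrix (Fin 2) (Fin 2) ℝ) = 2 * cos θ) (t : ℝ) :
    rotationCurve g θ (t + θ) = rotationCurve g θ t * g := by
  have hsin : sin (t + θ) = 2 * cos θ * sin t - sin (t - θ) := by
    rw [sin_add, sin_sub]; ring
  simp only [rotationCurve, sub_mul, smul_mul, one_mul, coe_mul_self_fin_two, hθ, hsin,
    add_sub_cancel_right]
  ext i j
  simp only [sub_apply, smul_apply, smul_eq_mul]
  ring

lemma rotationCurve_int_mul (hθ : trace (g : Matrix (Fin 2) (Fin 2) ℝ) = 2 * cos θ)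
    (hs : sin θ ≠ 0) (n : ℤ) :
    rotationCurve g θ (n * θ) = ((g ^ n : SL(2, ℝ)) : Matrix (Fin 2) (Fin 2) ℝ) := by
  induction n using Int.induction_on with
  | zero => simp [rotationCurve_zero hs]
  | succ n ih =>
    rw [_root_.zpow_add_one, coe_mul, ← ih, ← rotationCurve_add hθ]
    push_cast
    ring_nf
  | pred n ih =>
    have h := rotationCurve_add hθ (((-n - 1 : ℤ) : ℝ) * θ)
    rw [show ((-n - 1 : ℤ) : ℝ) * θ + θ = ((-n : ℤ) : ℝ) * θ by push_cast; ring, ih] at h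
    rw [_root_.zpow_sub_one, coe_mul, h, Matrix.mul_assoc, ← coe_mul, mul_inv_cancel, coe_one,
      Matrix.mul_one]

lemma irrational_div_two_pi_of_not_isOfFinOrder
    (hθ : trace (g : Matrix (Fin 2) (Fin 2) ℝ) = 2 * cos θ) (hs : sin θ ≠ 0)
    (hg : ¬IsOfFinOrder g) : Irrational (θ / (2 * π)) := by
  rintro ⟨q, hq⟩
  refine hg (isOfFinOrder_iff_pow_eq_one.2 ⟨q.den, q.den_pos, Subtype.ext ?_⟩)
  have hangle : ((q.den : ℤ) : ℝ) * θ = 0 + q.num * (2 * π) := by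
    have hθq : θ = q * (2 * π) := by rw [hq]; field_simp
    rw [hθq, Rat.cast_def]
    field_simp
    push_cast
    ring
  rw [← zpow_natCast, ← rotationCurve_int_mul hθ hs, hangle, rotationCurve_add_two_pi_mul_int,
    rotationCurve_zero hs, coe_one]

lemma neg_one_mem_closure_zpowers_of_cos (hθ : trace (g : Matrix (Fin 2) (Fin 2) ℝ) = 2 * cos θ)
    (hs : sin θ ≠ 0) (hg : ¬IsOfFinOrder g) :
    -1 ∈ closure (Subgroup.zpowers g : Set SL(2, ℝ)) := by
  have hval : IsClosedEmbedding ((↑) : SL(2, ℝ) → Matrix (Fin 2) (Fin 2) ℝ) :=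
    isClosedEmbedding_val
  refine (hval.isInducing.closure_eq_preimage_closure_image _).ge ?_
  -- the embedding lemma is stated on the underlying subtype; restate the goal on `SL(2, ℝ)`
  show ((-1 : SL(2, ℝ)) : Matrix (Fin 2) (Fin 2) ℝ) ∈
    closure (((↑) : SL(2, ℝ) → Matrix (Fin 2) (Fin 2) ℝ) '' (Subgroup.zpowers g : Set SL(2, ℝ)))
  rw [coe_neg, coe_one]
  have hdense : Dense (AddSubgroup.closure {θ, 2 * π} : Set ℝ) :=
    dense_addSubgroupClosure_pair_iff.2 (irrational_div_two_pi_of_not_isOfFinOrder hθ hs hg)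
  have hmaps : Set.MapsTo (rotationCurve g θ) (AddSubgroup.closure {θ, 2 * π})
      (((↑) : SL(2, ℝ) → Matrix (Fin 2) (Fin 2) ℝ) '' (Subgroup.zpowers g : Set SL(2, ℝ))) := by
    intro t ht
    obtain ⟨m, k, rfl⟩ := AddSubgroup.mem_closure_pair.1 ht
    refine ⟨g ^ m, ⟨m, rfl⟩, ?_⟩
    simp only [zsmul_eq_mul, rotationCurve_add_two_pi_mul_int, rotationCurve_int_mul hθ hs]
  simpa [rotationCurve_pi hs] using hmaps.closure continuous_rotationCurve (hdense π)

lemma exists_cos_eq_of_isElliptic (hg : (g : Matrix (Fin 2) (Fin 2) ℝ).IsElliptic) :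
    ∃ θ, trace (g : Matrix (Fin 2) (Fin 2) ℝ) = 2 * cos θ ∧ sin θ ≠ 0 := by
  have htr : trace (g : Matrix (Fin 2) (Fin 2) ℝ) ^ 2 < 4 := by
    simpa [IsElliptic, discr_fin_two] using hg
  have h1 : |trace (g : Matrix (Fin 2) (Fin 2) ℝ) / 2| < 1 := by
    rw [abs_lt]; constructor <;> nlinarith
  obtain ⟨hlo, hhi⟩ := abs_lt.1 h1
  refine ⟨arccos (trace (g : Matrix (Fin 2) (Fin 2) ℝ) / 2), ?_, ?_⟩
  · rw [cos_arccos hlo.le hhi.le]; ring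
  · rw [sin_arccos]
    exact (sqrt_pos.2 (by nlinarith)).ne'

lemma neg_one_mem_closure_zpowers (hg : (g : Matrix (Fin 2) (Fin 2) ℝ).IsElliptic)
    (hfin : ¬IsOfFinOrder g) : -1 ∈ closure (Subgroup.zpowers g : Set SL(2, ℝ)) :=
  let ⟨_, hθ, hs⟩ := exists_cos_eq_of_isElliptic hg
  neg_one_mem_closure_zpowers_of_cos hθ hs hfin

end Matrix.SpecialLinearGroup

namespace Complex

lemma exp_neg_I_mul_arg {w : ℂ} (hw : w ≠ 0) : exp (-I * w.arg) = ‖w‖ / w := by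
  rw [eq_div_iff hw]
  nth_rewrite 2 [← norm_mul_exp_arg_mul_I w]
  rw [mul_left_comm, ← exp_add, show -I * w.arg + w.arg * I = 0 by ring,
    exp_zero, mul_one]

end Complex

namespace UpperHalfPlane

lemma isElliptic_of_existsUnique_smul_eq_self {g : SL(2, ℝ)} (h : ∃! z : ℍ, g • z = z) :
    (g : Matrix (Fin 2) (Fin 2) ℝ).IsElliptic := by
  refine isElliptic_of_exists_smul_eq_self (g := SpecialLinearGroup.toGL g) (by simp)
    (fun hcenter => ?_) h.exists
  obtain ⟨z, w, hzw⟩ := exists_pair_ne ℍ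
  have hfix := forall_smul_eq_self_iff_mem_center.2 hcenter
  exact hzw (h.unique (hfix z) (hfix w))

noncomputable def weightOneFactor (g : SL(2, ℝ)) (z : ℍ) : ℂ :=
  Complex.exp (-Complex.I * (denom g z).arg)

lemma weightOneFactor_eq_norm_div (g : SL(2, ℝ)) (z : ℍ) :
    weightOneFactor g z = ‖denom g z‖ / denom g z :=
  Complex.exp_neg_I_mul_arg (denom_ne_zero g z)

lemma denom_cocycle_SL (g h : SL(2, ℝ)) (z : ℍ) :
    denom (g * h : SL(2, ℝ)) z = denom g (h • z : ℍ) * denom h z := by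
  rw [map_mul, denom_cocycle_σ]
  simp only [σ, SpecialLinearGroup.coeToGL_det, Units.val_one, zero_lt_one, ↓reduceIte,
    ContinuousAlgEquiv.refl_apply]
  rfl

lemma weightOneFactor_mul (g h : SL(2, ℝ)) (z : ℍ) :
    weightOneFactor (g * h) z = weightOneFactor g (h • z) * weightOneFactor h z := by
  simp only [weightOneFactor_eq_norm_div, denom_cocycle_SL, norm_mul,
    Complex.ofReal_mul, mul_div_mul_comm]

@[simp] lemma weightOneFactor_one (z : ℍ) : weightOneFactor 1 z = 1 := by
  simp [weightOneFactor_eq_norm_div]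

@[simp] lemma weightOneFactor_neg_one (z : ℍ) : weightOneFactor (-1) z = -1 := by
  simp [weightOneFactor_eq_norm_div, denom]

lemma continuous_weightOneFactor (z : ℍ) : Continuous (weightOneFactor · z) := by
  simp only [weightOneFactor_eq_norm_div]
  have : Continuous (fun g : SL(2, ℝ) => denom g z) := by
    simp only [denom]
    fun_prop
  exact (Complex.continuous_ofReal.comp this.norm).div this (denom_ne_zero · z)

noncomputable def weightOneStabilizer (c : ℍ → ℂ) : Subgroup SL(2, ℝ) where
  carrier := {g | ∀ z, weightOneFactor g z * c (g • z) = c z}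
  one_mem' := by simp
  mul_mem' {g h} hg hh z := by
    rw [weightOneFactor_mul, mul_smul, mul_right_comm, hg, mul_comm, hh]
  inv_mem' {g} hg z := by
    have hcocycle : weightOneFactor g (g⁻¹ • z) * weightOneFactor g⁻¹ z = 1 := by
      rw [← weightOneFactor_mul, mul_inv_cancel, weightOneFactor_one]
    calc weightOneFactor g⁻¹ z * c (g⁻¹ • z)
        = weightOneFactor g⁻¹ z * (weightOneFactor g (g⁻¹ • z) * c z) := by
          rw [← hg (g⁻¹ • z), smul_inv_smul]
      _ = c z := by rw [← mul_assoc, mul_comm (weightOneFactor g⁻¹ z), hcocycle, one_mul]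

lemma isClosed_weightOneStabilizer {c : ℍ → ℂ} (hc : Continuous c) :
    IsClosed (weightOneStabilizer c : Set SL(2, ℝ)) := by
  show IsClosed {g : SL(2, ℝ) | ∀ z, weightOneFactor g z * c (g • z) = c z}
  simp only [Set.ofPred_forall]
  refine isClosed_iInter fun z => isClosed_eq ?_ continuous_const
  exact (continuous_weightOneFactor z).mul (by fun_prop)

lemma eq_zero_of_neg_one_mem_weightOneStabilizer {c : ℍ → ℂ}
    (h : -1 ∈ weightOneStabilizer c) (z : ℍ) : c z = 0 := by
  have hz := h z
  have hneg : (-1 : SL(2, ℝ)) • z = z := by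
    ext
    simp [coe_specialLinearGroup_apply]
  rw [weightOneFactor_neg_one, hneg] at hz
  linear_combination -hz / 2

end UpperHalfPlane

/-- **One circle lemma (weight 1).** If a continuous function on the upper half-plane is
invariant under the weight-1 action of an elliptic matrix of infinite order, then it
vanishes identically. -/
theorem one_circle_lemma (c : ℍ → ℂ) (hc : Continuous c)
    (E : SL(2, ℝ))
    (hell : ∃! z : ℍ, E • z = z)
    (hinf : ∀ n : ℕ, 0 < n → E ^ n ≠ 1)
    (h : ∀ z : ℍ,
      Complex.exp (-Complex.I * (Complex.arg ((E 1 0 : ℝ) * (z : ℂ) + (E 1 1 : ℝ)) : ℂ)) *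
        c (E • z) = c z) :
    ∀ z : ℍ, c z = 0 := by
  have hE : E ∈ weightOneStabilizer c := h
  have hfin : ¬IsOfFinOrder E := fun hfin =>
    let ⟨n, hn, hpow⟩ := isOfFinOrder_iff_pow_eq_one.1 hfin
    hinf n hn hpow
  have hneg : -1 ∈ weightOneStabilizer c :=
    (isClosed_weightOneStabilizer hc).closure_subset_iff.2 (Subgroup.zpowers_le.2 hE)
      (SpecialLinearGroup.neg_one_mem_closure_zpowers
        (isElliptic_of_existsUnique_smul_eq_self hell) hfin)
  exact eq_zero_of_neg_one_mem_weightOneStabilizer hneg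
end

section
/- Let E ∈ SL(2,ℝ) be a matrix whose trace is a rational number t with |t| < 2 and t ∉ {−1, 0, 1}. Then E is elliptic (it has a unique fixed point in ℍ) and E has infinite order in SL(2,ℝ). -/
/-!
Since `t ^ 2 < 4`, the discriminant `t ^ 2 - 4` of `E` is negative, so `E` is elliptic and fixes
exactly one point of `ℍ`. By Cayley–Hamilton, `tr (E ^ n) = Cₙ(t)` for the normalized Chebyshev
polynomials `C₀ = 2`, `C₁ = X`, `Cₙ₊₂ = X Cₙ₊₁ - Cₙ`, which are monic with integer coefficients
for `n ≥ 1`. If `E ^ n = 1` then `t` is a rational root of the monic integer polynomial `Cₙ - 2`,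
hence an integer, and `|t| < 2` leaves only `t ∈ {-1, 0, 1}`.
-/

open Matrix MatrixGroups UpperHalfPlane

namespace Polynomial

variable {R : Type*} [CommRing R] [Nontrivial R]

theorem Monic.X_mul_sub {p q : R[X]} (hp : p.Monic) (hq : q.natDegree ≤ p.natDegree) :
    (X * p - q).Monic ∧ (X * p - q).natDegree = p.natDegree + 1 := by
  have hXp : (X * p).natDegree = p.natDegree + 1 := by
    rw [natDegree_X_mul hp.ne_zero, add_comm]
  have hlt : q.natDegree < (X * p).natDegree := by omega
  exact ⟨(monic_X.mul hp).sub_of_left (degree_lt_degree hlt),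
    by rw [natDegree_sub_eq_left_of_natDegree_lt hlt, hXp]⟩

namespace Chebyshev

theorem monic_C_natCast_add_one_and_natDegree (n : ℕ) :
    (C R (n + 1)).Monic ∧ (C R (n + 1)).natDegree = n + 1 := by
  suffices (C R (n + 1)).Monic ∧ (C R (n + 1)).natDegree = n + 1 ∧ (C R n).natDegree ≤ n from
    ⟨this.1, this.2.1⟩
  induction n with
  | zero => simp [C_zero, ← C_ofNat]
  | succ n ih =>
    obtain ⟨hmon, hdeg, hdeg'⟩ := ih
    obtain ⟨hmon₂, hdeg₂⟩ := hmon.X_mul_sub (q := C R n) (by omega)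
    push_cast
    rw [show (n : ℤ) + 1 + 1 = n + 2 by ring, C_add_two]
    exact ⟨hmon₂, by omega, hdeg.le⟩

end Chebyshev

end Polynomial

open Polynomial

theorem Rat.exists_intCast_eq_of_chebyshev_C_eval_eq_two {t : ℚ} {n : ℕ} (hn : n ≠ 0)
    (h : (Chebyshev.C ℚ n).eval t = 2) : ∃ m : ℤ, (m : ℚ) = t := by
  obtain ⟨k, rfl⟩ := Nat.exists_eq_add_one_of_ne_zero hn
  push_cast at h
  obtain ⟨hmon, hdeg⟩ := Chebyshev.monic_C_natCast_add_one_and_natDegree (R := ℤ) k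
  have hmon₂ : (Chebyshev.C ℤ (k + 1) - 2).Monic :=
    hmon.sub_of_left (degree_lt_degree (by rw [hdeg]; simp))
  have hroot : aeval t (Chebyshev.C ℤ (k + 1) - 2) = 0 := by
    rw [aeval_def, eval₂_eq_eval_map, Polynomial.map_sub, Chebyshev.map_C]
    simp [h]
  exact isInteger_of_is_root_of_monic hmon₂ hroot

namespace Matrix

variable {R : Type*} [CommRing R]

theorem pow_add_two_eq_trace_smul_sub_of_det_eq_one {A : Matrix (Fin 2) (Fin 2) R}
    (hA : A.det = 1) (n : ℕ) : A ^ (n + 2) = A.trace • A ^ (n + 1) - A ^ n := by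
  nontriviality R
  have hCH : A ^ 2 = A.trace • A - 1 := by
    have := A.aeval_self_charpoly
    simp only [charpoly_fin_two, hA, map_add, map_sub, map_pow, aeval_X, map_mul, aeval_C,
      map_one, ← Algebra.smul_def] at this
    rw [eq_sub_iff_add_eq, ← sub_eq_zero, ← this]
    abel
  rw [pow_add, hCH, mul_sub, mul_smul_comm, mul_one, ← pow_succ]

theorem trace_pow_eq_eval_chebyshev_C {A : Matrix (Fin 2) (Fin 2) R} (hA : A.det = 1) (n : ℕ) :
    (A ^ n).trace = (Chebyshev.C R n).eval A.trace := by
  induction n using Nat.twoStepInduction with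
  | zero => simp [Chebyshev.C_zero]
  | one => simp
  | more n ih₀ ih₁ =>
    push_cast at ih₁ ⊢
    rw [pow_add_two_eq_trace_smul_sub_of_det_eq_one hA, trace_sub, trace_smul, ih₀, ih₁,
      Chebyshev.C_add_two]
    simp

theorem exists_intCast_eq_of_pow_eq_one {K : Type*} [Field K] [CharZero K]
    {A : Matrix (Fin 2) (Fin 2) K} (hA : A.det = 1) {t : ℚ} (ht : A.trace = t) {n : ℕ}
    (hn : n ≠ 0) (hAn : A ^ n = 1) : ∃ m : ℤ, (m : ℚ) = t := by
  refine Rat.exists_intCast_eq_of_chebyshev_C_eval_eq_two hn ?_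
  have h := trace_pow_eq_eval_chebyshev_C hA n
  rw [hAn, trace_one, ht, ← Chebyshev.map_C (Rat.castHom K), ← Rat.coe_castHom,
    eval_map_apply, Rat.coe_castHom] at h
  exact_mod_cast h.symm

end Matrix

theorem UpperHalfPlane.existsUnique_smul_eq_self_of_abs_trace_lt_two (g : SL(2, ℝ))
    (hg : |(g : Matrix (Fin 2) (Fin 2) ℝ).trace| < 2) : ∃! z : ℍ, g • z = z := by
  set g' := SpecialLinearGroup.mapGL ℝ g
  have hcoe : g'.val = g := by simp [g']
  have hdet : 0 < g'.val.det := by simp [hcoe]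
  have hell : g'.val.IsElliptic := by
    rw [IsElliptic, discr_fin_two, hcoe, g.prop]
    nlinarith [abs_lt.mp hg]
  -- `SL(2, ℝ)` acts on `ℍ` through `mapGL`.
  have hfix (z : ℍ) : g • z = z ↔ z = fixedPt g' hell :=
    gl_smul_eq_self_iff_eq_fixedPt hdet hell
  simp_rw [hfix]
  exact existsUnique_eq

/-- A matrix in `SL(2,ℝ)` whose trace is a rational number `t` with `|t| < 2` and
`t ∉ {-1, 0, 1}` is elliptic of infinite order. -/
theorem rational_trace_elliptic_infinite_order (E : SL(2, ℝ)) (t : ℚ)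
    (ht : Matrix.trace (E : Matrix (Fin 2) (Fin 2) ℝ) = (t : ℝ))
    (hlt : |t| < 2)
    (h : t ≠ -1 ∧ t ≠ 0 ∧ t ≠ 1) :
    (∃! z : ℍ, E • z = z) ∧ (∀ n : ℕ, 0 < n → E ^ n ≠ 1) := by
  refine ⟨existsUnique_smul_eq_self_of_abs_trace_lt_two E (by rw [ht]; exact_mod_cast hlt), ?_⟩
  intro n hn hEn
  obtain ⟨m, rfl⟩ := exists_intCast_eq_of_pow_eq_one E.prop ht hn.ne'
    (by simpa using congrArg Subtype.val hEn)
  have hm : |m| < 2 := by exact_mod_cast hlt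
  rw [abs_lt] at hm
  norm_cast at h
  omega
end

section
/- Let N be a positive integer, let q and s be distinct primes, and let r, r̃ be integers with qs = 1 + r·r̃·N. Then the matrix M(q,s,r) = [[1, 2r/q], [−2r̃N/s, −3 + 4/(qs)]] has determinant 1 (so lies in SL(2,ℝ)), its trace equals −2 + 4/(qs) and satisfies |tr M(q,s,r)| < 2, and M(q,s,r) is an elliptic matrix of infinite order. -/
open Matrix MatrixGroups UpperHalfPlane

/-- The matrix `M(q,s,r) = [[1, 2r/q], [-2r̃N/s, -3 + 4/(qs)]]`. -/
noncomputable def Mqsr (N q s : ℕ) (r r' : ℤ) : Matrix (Fin 2) (Fin 2) ℝ :=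
  !![1, 2 * (r : ℝ) / q; -2 * (r' : ℝ) * N / s, -3 + 4 / ((q : ℝ) * s)]

/-- An element of `SL(2,ℝ)` with `|trace| < 2` has a unique fixed point in `ℍ`. -/
lemma exists_unique_fixed_of_abs_trace_lt_two (E : SL(2, ℝ))
    (ht : |Matrix.trace (E : Matrix (Fin 2) (Fin 2) ℝ)| < 2) :
    ∃! z : ℍ, E • z = z := by
  set a : ℝ := (E : Matrix (Fin 2) (Fin 2) ℝ) 0 0 with ha
  set b : ℝ := (E : Matrix (Fin 2) (Fin 2) ℝ) 0 1 with hb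
  set c : ℝ := (E : Matrix (Fin 2) (Fin 2) ℝ) 1 0 with hc
  set d : ℝ := (E : Matrix (Fin 2) (Fin 2) ℝ) 1 1 with hd
  have hdet : a * d - b * c = 1 := by
    have := E.property
    rwa [Matrix.det_fin_two] at this
  have htr : Matrix.trace (E : Matrix (Fin 2) (Fin 2) ℝ) = a + d := by
    rw [Matrix.trace_fin_two]
  rw [htr] at ht
  have ht2 : (a + d) ^ 2 < 4 := by
    rcases abs_lt.mp ht with ⟨h1, h2⟩
    nlinarith
  have hcne : c ≠ 0 := by
    intro h0
    rw [h0] at hdet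
    nlinarith [sq_nonneg (a - d)]
  -- fixed point equation
  have key : ∀ z : ℍ, E • z = z ↔
      (c : ℂ) * (z : ℂ) ^ 2 + ((d : ℂ) - (a : ℂ)) * (z : ℂ) - (b : ℂ) = 0 := by
    intro z
    have hcoe : ((E • z : ℍ) : ℂ) = ((a : ℂ) * z + b) / ((c : ℂ) * z + d) := by
      rw [UpperHalfPlane.specialLinearGroup_apply, UpperHalfPlane.coe_mk]
      simp [ha, hb, hc, hd]
    have hden : (c : ℂ) * (z : ℂ) + (d : ℂ) ≠ 0 := by
      intro h0
      have him := congrArg Complex.im h0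
      simp [Complex.add_im, Complex.mul_im] at him
      rcases him with him | him
      · exact hcne him
      · exact z.im_pos.ne' him
    constructor
    · intro hfix
      have hdiv : ((a : ℂ) * z + b) / ((c : ℂ) * z + d) = (z : ℂ) := by
        rw [← hcoe, hfix]
      rw [div_eq_iff hden] at hdiv
      linear_combination -hdiv
    · intro hquad
      apply UpperHalfPlane.ext
      rw [hcoe, div_eq_iff hden]
      linear_combination -hquad
  -- the fixed point
  set x : ℝ := (a - d) / (2 * c) with hx
  set y : ℝ := Real.sqrt (4 - (a + d) ^ 2) / (2 * |c|) with hy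
  have hypos : 0 < y := by
    apply div_pos (Real.sqrt_pos.mpr (by linarith)) (by positivity)
  have hy2 : y ^ 2 = (4 - (a + d) ^ 2) / (4 * c ^ 2) := by
    rw [hy, div_pow, Real.sq_sqrt (by linarith), mul_pow, sq_abs]
    norm_num
  set z₀ : ℍ := UpperHalfPlane.mk ⟨x, y⟩ (by simpa using hypos) with hz₀
  have hz₀coe : (z₀ : ℂ) = (x : ℂ) + (y : ℂ) * Complex.I := by
    rw [hz₀, UpperHalfPlane.coe_mk, Complex.mk_eq_add_mul_I]
  have h2cx : (2 * c) * x = a - d := by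
    rw [hx]; field_simp
  have h4cy : (4 * c ^ 2) * y ^ 2 = 4 - (a + d) ^ 2 := by
    rw [hy2]; field_simp
  have hre' : (4 * c ^ 2) * (c * (x ^ 2 - y ^ 2) + (d - a) * x - b) = 0 := by
    linear_combination (c * (2 * c * x + (a - d)) + 2 * c * (d - a)) * h2cx
      - c * h4cy + 4 * c * hdet
  have hre : c * (x ^ 2 - y ^ 2) + (d - a) * x - b = 0 := by
    rcases mul_eq_zero.mp hre' with h0 | h0
    · exact absurd h0 (by positivity)
    · exact h0
  have him : c * (2 * x * y) + (d - a) * y = 0 := by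
    rw [hx]
    field_simp
    ring
  have hquad0 : (c : ℂ) * (z₀ : ℂ) ^ 2 + ((d : ℂ) - (a : ℂ)) * (z₀ : ℂ) - (b : ℂ) = 0 := by
    rw [hz₀coe]
    have e1 : (c : ℂ) * ((x : ℂ) + (y : ℂ) * Complex.I) ^ 2
        + ((d : ℂ) - (a : ℂ)) * ((x : ℂ) + (y : ℂ) * Complex.I) - (b : ℂ)
        = ((c * (x ^ 2 - y ^ 2) + (d - a) * x - b : ℝ) : ℂ)
          + ((c * (2 * x * y) + (d - a) * y : ℝ) : ℂ) * Complex.I := by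
      push_cast
      linear_combination ((c : ℂ) * (y : ℂ) ^ 2) * Complex.I_sq
    rw [e1, hre, him]
    simp
  refine ⟨z₀, (key z₀).mpr hquad0, ?_⟩
  intro w hw
  have hwq := (key w).mp hw
  by_contra hne
  have hcoene : (w : ℂ) ≠ (z₀ : ℂ) := fun hcc => hne (UpperHalfPlane.ext hcc)
  have hfac : ((w : ℂ) - (z₀ : ℂ)) *
      ((c : ℂ) * ((w : ℂ) + (z₀ : ℂ)) + ((d : ℂ) - (a : ℂ))) = 0 := by
    linear_combination hwq - hquad0
  rcases mul_eq_zero.mp hfac with h1 | h2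
  · exact hcoene (sub_eq_zero.mp h1)
  · have him2 := congrArg Complex.im h2
    simp [Complex.add_im, Complex.mul_im] at him2
    rcases him2 with him2 | him2
    · exact hcne him2
    · linarith [w.im_pos, z₀.im_pos, him2]

/-- If a real `2×2` matrix of determinant one and trace of absolute value `< 2`
satisfies `A ^ n = 1` with `n > 0`, then its trace is integral over `ℤ`. -/
lemma trace_isIntegral_of_pow_eq_one (A : Matrix (Fin 2) (Fin 2) ℝ)
    (hdet : A.det = 1) (ht : |A.trace| < 2) (n : ℕ) (hn : 0 < n) (hA : A ^ n = 1) :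
    IsIntegral ℤ ((A.trace : ℝ) : ℂ) := by
  set t : ℝ := A.trace with htt
  have ht2 : t ^ 2 < 4 := by
    rcases abs_lt.mp ht with ⟨h1, h2⟩; nlinarith
  set y : ℝ := Real.sqrt (4 - t ^ 2) / 2 with hy
  have hy2 : y ^ 2 = (4 - t ^ 2) / 4 := by
    rw [hy, div_pow, Real.sq_sqrt (by linarith)]; norm_num
  set lam : ℂ := ((t / 2 : ℝ) : ℂ) + (y : ℂ) * Complex.I with hlam
  have hy2c : ((y : ℂ)) ^ 2 = ((4 : ℂ) - (t : ℂ) ^ 2) / 4 := by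
    have h' : ((y ^ 2 : ℝ) : ℂ) = (((4 - t ^ 2) / 4 : ℝ) : ℂ) := by rw [hy2]
    push_cast at h'
    linear_combination h'
  have hquad : lam ^ 2 - (t : ℂ) * lam + 1 = 0 := by
    rw [hlam]
    push_cast
    linear_combination (Complex.I ^ 2) * hy2c + (((4 : ℂ) - (t : ℂ) ^ 2) / 4) * Complex.I_sq
  -- complexification
  set M : Matrix (Fin 2) (Fin 2) ℂ := A.map Complex.ofReal with hM
  have hMdet : (M - lam • 1).det = 0 := by
    have hd2 : A 0 0 * A 1 1 - A 0 1 * A 1 0 = 1 := by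
      rw [← Matrix.det_fin_two]; exact hdet
    have htr2 : A 0 0 + A 1 1 = t := by rw [htt, Matrix.trace_fin_two]
    have e00 : (M - lam • 1) 0 0 = (A 0 0 : ℂ) - lam := by simp [hM]
    have e01 : (M - lam • 1) 0 1 = (A 0 1 : ℂ) := by simp [hM]
    have e10 : (M - lam • 1) 1 0 = (A 1 0 : ℂ) := by simp [hM]
    have e11 : (M - lam • 1) 1 1 = (A 1 1 : ℂ) - lam := by simp [hM]
    rw [Matrix.det_fin_two, e00, e01, e10, e11]
    have hc1 : ((A 0 0 : ℂ)) * (A 1 1 : ℂ) - (A 0 1 : ℂ) * (A 1 0 : ℂ) = 1 := by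
      exact_mod_cast congrArg (Complex.ofReal) hd2
    have hc2 : (A 0 0 : ℂ) + (A 1 1 : ℂ) = (t : ℂ) := by
      exact_mod_cast congrArg (Complex.ofReal) htr2
    linear_combination hquad - lam * hc2 + hc1
  obtain ⟨v, hv0, hv⟩ := (Matrix.exists_mulVec_eq_zero_iff).mpr hMdet
  have heig : M *ᵥ v = lam • v := by
    have h1 : (M - lam • 1) *ᵥ v = M *ᵥ v - lam • v := by
      rw [Matrix.sub_mulVec, Matrix.smul_mulVec, Matrix.one_mulVec]
    rw [h1] at hv
    exact sub_eq_zero.mp hv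
  have hpow : ∀ k : ℕ, (M ^ k) *ᵥ v = (lam ^ k) • v := by
    intro k
    induction k with
    | zero => simp [Matrix.one_mulVec]
    | succ k ih =>
      rw [pow_succ', ← Matrix.mulVec_mulVec, ih, Matrix.mulVec_smul, heig,
        smul_smul, pow_succ, mul_comm]
  have hMn : M ^ n = 1 := by
    have hMM : M = Complex.ofRealHom.mapMatrix A := rfl
    rw [hMM, ← map_pow, hA, _root_.map_one]
  have hveq : v = (lam ^ n) • v := by
    have := hpow n
    rwa [hMn, Matrix.one_mulVec] at this
  have hlamn : lam ^ n = 1 := by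
    obtain ⟨i, hi⟩ := Function.ne_iff.mp hv0
    have : (lam ^ n - 1) * v i = 0 := by
      have := congrArg (fun w => w i) hveq
      simp only [Pi.smul_apply, smul_eq_mul] at this
      linear_combination -this
    rcases mul_eq_zero.mp this with h1 | h2
    · linear_combination h1
    · exact absurd h2 hi
  have hint1 : IsIntegral ℤ lam := by
    refine ⟨Polynomial.X ^ n - Polynomial.C 1, Polynomial.monic_X_pow_sub_C 1 hn.ne', ?_⟩
    simp [hlamn]
  have hint2 : IsIntegral ℤ ((starRingEnd ℂ) lam) := by
    refine ⟨Polynomial.X ^ n - Polynomial.C 1, Polynomial.monic_X_pow_sub_C 1 hn.ne', ?_⟩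
    simp [← map_pow, hlamn]
  have hsum : lam + (starRingEnd ℂ) lam = ((t : ℝ) : ℂ) := by
    rw [Complex.add_conj]
    have hre : lam.re = t / 2 := by simp [hlam]
    rw [hre]
    push_cast
    ring
  rw [← hsum]
  exact hint1.add hint2

/-- For distinct primes `q, s` and integers `r, r̃` with `qs = 1 + r r̃ N`, the matrix
`M(q,s,r)` has determinant 1 (so lies in `SL(2,ℝ)`), trace `-2 + 4/(qs)` of absolute
value `< 2`, and is elliptic of infinite order. -/
theorem M_qsr_elliptic_infinite_order (N : ℕ) (hN : 0 < N)
    (q s : ℕ) (hq : Nat.Prime q) (hs : Nat.Prime s) (hqs : q ≠ s)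
    (r r' : ℤ) (h : (q : ℤ) * s = 1 + r * r' * N) :
    (Mqsr N q s r r').det = 1 ∧
    Matrix.trace (Mqsr N q s r r') = -2 + 4 / ((q : ℝ) * s) ∧
    |Matrix.trace (Mqsr N q s r r')| < 2 ∧
    ∃ E : SL(2, ℝ), (E : Matrix (Fin 2) (Fin 2) ℝ) = Mqsr N q s r r' ∧
      (∃! z : ℍ, E • z = z) ∧
      (∀ n : ℕ, 0 < n → E ^ n ≠ 1) := by
  have hq0 : (q : ℝ) ≠ 0 := Nat.cast_ne_zero.mpr hq.ne_zero
  have hs0 : (s : ℝ) ≠ 0 := Nat.cast_ne_zero.mpr hs.ne_zero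
  have h2q := hq.two_le
  have h2s := hs.two_le
  have hqs6 : 6 ≤ q * s := by
    rcases lt_or_gt_of_ne hqs with hlt | hlt
    · calc 6 = 2 * 3 := rfl
        _ ≤ q * s := Nat.mul_le_mul hq.two_le (by omega)
    · calc 6 = 3 * 2 := rfl
        _ ≤ q * s := Nat.mul_le_mul (by omega) hs.two_le
  have hqs6R : (6 : ℝ) ≤ (q : ℝ) * s := by exact_mod_cast hqs6
  have hqsposR : (0 : ℝ) < (q : ℝ) * s := by linarith
  have hR : (q : ℝ) * s = 1 + (r : ℝ) * (r' : ℝ) * N := by exact_mod_cast h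
  have hdet : (Mqsr N q s r r').det = 1 := by
    rw [Mqsr, Matrix.det_fin_two_of]
    field_simp
    linear_combination (-4 : ℝ) * hR
  have htrace : Matrix.trace (Mqsr N q s r r') = -2 + 4 / ((q : ℝ) * s) := by
    rw [Mqsr, Matrix.trace_fin_two]
    norm_num
    ring
  have hfrac : 0 < 4 / ((q : ℝ) * s) ∧ 4 / ((q : ℝ) * s) ≤ 2 / 3 := by
    constructor
    · positivity
    · rw [div_le_div_iff₀ hqsposR (by norm_num)]
      linarith
  have habs : |Matrix.trace (Mqsr N q s r r')| < 2 := by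
    rw [htrace, abs_lt]
    constructor <;> linarith [hfrac.1, hfrac.2]
  refine ⟨hdet, htrace, habs, ?_⟩
  set E : SL(2, ℝ) := ⟨Mqsr N q s r r', hdet⟩ with hE
  have hEcoe : (E : Matrix (Fin 2) (Fin 2) ℝ) = Mqsr N q s r r' := rfl
  refine ⟨E, hEcoe, exists_unique_fixed_of_abs_trace_lt_two E (by rwa [hEcoe]), ?_⟩
  intro n hn hEn
  have hAn : (Mqsr N q s r r') ^ n = 1 := by
    have := congrArg (fun g : SL(2, ℝ) => (g : Matrix (Fin 2) (Fin 2) ℝ)) hEn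
    simpa [Matrix.SpecialLinearGroup.coe_pow, hEcoe] using this
  have hint := trace_isIntegral_of_pow_eq_one _ hdet habs n hn hAn
  -- the trace is a non-integral rational number: contradiction
  set ρ : ℚ := -2 + 4 / ((q : ℚ) * s) with hρ
  have hρR : ((ρ : ℚ) : ℝ) = Matrix.trace (Mqsr N q s r r') := by
    rw [htrace, hρ]
    push_cast
    ring
  have hintρ : IsIntegral ℤ ρ := by
    have h1 : ((Matrix.trace (Mqsr N q s r r') : ℝ) : ℂ) = algebraMap ℚ ℂ ρ := by
      rw [eq_ratCast (algebraMap ℚ ℂ) ρ, ← hρR]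
      push_cast
      ring
    rw [h1] at hint
    exact (isIntegral_algebraMap_iff (algebraMap ℚ ℂ).injective).mp hint
  obtain ⟨m, hm⟩ := IsIntegrallyClosed.isIntegral_iff.mp hintρ
  have hmQ : (m : ℚ) = ρ := by
    rw [← hm]; simp
  have hqs6Q : (6 : ℚ) ≤ (q : ℚ) * s := by exact_mod_cast hqs6
  have hqsposQ : (0 : ℚ) < (q : ℚ) * s := by linarith
  have h1 : (0 : ℚ) < 4 / ((q : ℚ) * s) := by positivity
  have h2 : 4 / ((q : ℚ) * s) ≤ 2 / 3 := by
    rw [div_le_div_iff₀ hqsposQ (by norm_num)]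
    linarith
  have hlb : (-2 : ℚ) < (m : ℚ) := by rw [hmQ, hρ]; linarith
  have hub : ((m : ℚ)) < -1 := by rw [hmQ, hρ]; linarith
  have hlb' : (-2 : ℤ) < m := by exact_mod_cast hlb
  have hub' : m < -1 := by exact_mod_cast hub
  omega
end

section
/- Let D = [[19,−4],[24,−5]] and P_{3/5} = [[1, 3/5],[0,1]]. Then the matrix D⁻¹P_{3/5} = [[−5, 1],[−24, 23/5]] lies in SL(2,ℝ) and is an elliptic matrix of infinite order. -/
open Matrix MatrixGroups UpperHalfPlane

/-!
The trace of `E = D⁻¹ P_{3/5}` is `-2/5`, so its discriminant `tr² - 4` is negative: `E` is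
elliptic and therefore has exactly one fixed point in `ℍ`. For the order, `5 E` is an integer
matrix whose trace `-2` is prime to `5`. If `Eⁿ = 1`, then `(5 E)ⁿ = 5ⁿ` vanishes modulo `5`, so
`5 E` is nilpotent modulo `5` and its trace would vanish there.
-/

theorem UpperHalfPlane.existsUnique_smul_eq_self_of_isElliptic {g : SL(2, ℝ)}
    (hg : (g : Matrix (Fin 2) (Fin 2) ℝ).IsElliptic) : ∃! z : ℍ, g • z = z := by
  set g' : GL (Fin 2) ℝ := SpecialLinearGroup.mapGL ℝ g
  have hval : g'.val = g := by ext i j; simp [g']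
  have hpos : 0 < g'.val.det := by simp [hval]
  have hell : g'.IsElliptic := by rwa [GeneralLinearGroup.IsElliptic, hval]
  exact ⟨fixedPt g' hell, (gl_smul_eq_self_iff_eq_fixedPt hpos hell).2 rfl,
    fun _ => (gl_smul_eq_self_iff_eq_fixedPt hpos hell).1⟩

namespace Matrix

variable {ι : Type*} [Fintype ι] [DecidableEq ι]

theorem isNilpotent_map_zmod_of_pow_eq_natCast_pow {M : Matrix ι ι ℤ} {q n : ℕ} (hn : 0 < n)
    (h : M ^ n = (q : Matrix ι ι ℤ) ^ n) : IsNilpotent (M.map (Int.castRingHom (ZMod q))) := by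
  refine ⟨n, ?_⟩
  rw [← RingHom.mapMatrix_apply, ← map_pow, h, map_pow, map_natCast, ← diagonal_natCast,
    ZMod.natCast_self, diagonal_zero, zero_pow hn.ne']

theorem inv_natCast_smul_map_pow_ne_one_of_not_dvd_trace {K : Type*} [Field K] [CharZero K]
    {M : Matrix ι ι ℤ} {p : ℕ} [hp : Fact p.Prime] (hM : ¬ (p : ℤ) ∣ M.trace) {n : ℕ} (hn : 0 < n) :
    ((p : K)⁻¹ • M.map (Int.castRingHom K)) ^ n ≠ 1 := by
  intro h
  rw [smul_pow, inv_pow, inv_smul_eq_iff₀ (pow_ne_zero _ (Nat.cast_ne_zero.2 hp.out.ne_zero)),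
    ← Matrix.map_pow] at h
  have hpow : M ^ n = (p : Matrix ι ι ℤ) ^ n := by
    apply Matrix.map_injective (Int.castRingHom K).injective_int
    dsimp only
    rw [h, ← RingHom.mapMatrix_apply, map_pow, map_natCast, ← Nat.cast_pow, ← Nat.cast_pow,
      Nat.cast_smul_eq_nsmul, nsmul_one]
  have htrace :=
    (isNilpotent_trace_of_isNilpotent (isNilpotent_map_zmod_of_pow_eq_natCast_pow hn hpow)).eq_zero
  rw [← AddMonoidHom.map_trace] at htrace
  exact hM ((ZMod.intCast_zmod_eq_zero_iff_dvd _ _).1 htrace)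

end Matrix

/-- With `D = [[19,-4],[24,-5]]` and `P_{3/5} = [[1,3/5],[0,1]]`, the matrix
`D⁻¹ P_{3/5} = [[-5,1],[-24,23/5]]` lies in `SL(2,ℝ)` and is elliptic of infinite order. -/
theorem D_inv_P_elliptic_infinite_order :
    (!![19, -4; 24, -5] : Matrix (Fin 2) (Fin 2) ℝ)⁻¹ * !![1, 3/5; 0, 1] =
      !![-5, 1; -24, 23/5] ∧
    (!![-5, 1; -24, 23/5] : Matrix (Fin 2) (Fin 2) ℝ).det = 1 ∧
    ∃ E : SL(2, ℝ), (E : Matrix (Fin 2) (Fin 2) ℝ) = !![-5, 1; -24, 23/5] ∧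
      (∃! z : ℍ, E • z = z) ∧
      (∀ n : ℕ, 0 < n → E ^ n ≠ 1) := by
  have hdet : (!![-5, 1; -24, 23/5] : Matrix (Fin 2) (Fin 2) ℝ).det = 1 := by
    norm_num [det_fin_two_of]
  let E : SL(2, ℝ) := ⟨_, hdet⟩
  refine ⟨?_, hdet, E, rfl, ?_, fun n hn hE => ?_⟩
  · rw [inv_eq_left_inv (B := !![-5, 4; -24, 19])] <;> norm_num [mul_fin_two, ← one_fin_two]
  · apply existsUnique_smul_eq_self_of_isElliptic
    norm_num [E, IsElliptic, discr_fin_two, trace_fin_two_of, hdet]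
  · have : Fact (Nat.Prime 5) := ⟨by norm_num⟩
    have hscaled : ((5 : ℕ) : ℝ)⁻¹ • (!![-25, 5; -120, 23] : Matrix (Fin 2) (Fin 2) ℤ).map
        (Int.castRingHom ℝ) = !![-5, 1; -24, 23/5] := by
      ext i j; fin_cases i <;> fin_cases j <;> norm_num
    have hpow : (!![-5, 1; -24, 23/5] : Matrix (Fin 2) (Fin 2) ℝ) ^ n = 1 := by
      simpa using congrArg Subtype.val hE
    rw [← hscaled] at hpow
    exact inv_natCast_smul_map_pow_ne_one_of_not_dvd_trace (by decide) hn hpow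
end

section
/- The matrix [[1, −2/3],[11/2, −8/3]] has determinant 1 (so lies in SL(2,ℝ)) and is an elliptic matrix of infinite order. -/
open Matrix MatrixGroups UpperHalfPlane

/-!
A real matrix `A` of determinant `1` with `|tr A| < 2` is elliptic, so it has a unique fixed
point in `ℍ` by the classification of fixed points of Möbius maps.

By Cayley–Hamilton `A² = t A - 1` with `t = tr A`, hence `Aⁿ = S_{n-1}(t) A - S_{n-2}(t)` for the
Chebyshev polynomials `S` with `S_{n+1} = X S_n - S_{n-1}`. The lower left entry of an elliptic
matrix is nonzero, so `Aⁿ = 1` forces `S_{n-1}(t) = 0`. Writing `t = 2 cos θ`, the identity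
`S_{n-1}(2 cos θ) sin θ = sin (n θ)` then makes `θ` a rational multiple of `π`, so `t` is an
algebraic integer, which is impossible for `t = -5/3`.
-/

theorem Polynomial.Chebyshev.S_eval_ratCast_ne_zero {q : ℚ} (hq : |q| < 2)
    (hint : ∀ k : ℤ, q ≠ k) (n : ℕ) : (S ℝ n).eval (q : ℝ) ≠ 0 := by
  have hq' : |(q : ℝ) / 2| < 1 := by
    rw [abs_div, abs_two, div_lt_one two_pos]
    exact_mod_cast hq
  set θ := Real.arccos ((q : ℝ) / 2)
  have hcos : Real.cos θ = q / 2 := by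
    rw [abs_lt] at hq'
    exact Real.cos_arccos hq'.1.le hq'.2.le
  have h2cos : 2 * Real.cos θ = q := by rw [hcos, mul_div_cancel₀ _ two_ne_zero]
  intro hS
  obtain ⟨k, hk⟩ : ∃ k : ℤ, k * Real.pi = (n + 1) * θ := by
    have h := S_two_mul_real_cos θ n
    push_cast at h
    rw [← Real.sin_eq_zero_iff, ← h, h2cos, hS, zero_mul]
  have hθ : θ = ((k / (n + 1) : ℚ) : ℝ) * Real.pi := by
    push_cast
    field_simp
    linarith
  obtain ⟨m, hm⟩ := (Real.isIntegral_two_mul_cos_rat_mul_pi _).exists_int_iff_exists_rat.1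
    ⟨q, hθ ▸ h2cos⟩
  rw [← hθ, h2cos] at hm
  exact hint m (by exact_mod_cast hm)

namespace Matrix

section CommRing

variable {R : Type*} [CommRing R] {A : Matrix (Fin 2) (Fin 2) R}

theorem sq_eq_trace_smul_sub_one (h : A.det = 1) : A ^ 2 = A.trace • A - 1 := by
  rw [det_fin_two] at h
  ext i j
  fin_cases i <;> fin_cases j <;> simp [sq, mul_apply, trace_fin_two, Fin.sum_univ_two] <;> grind

open Polynomial Polynomial.Chebyshev in
theorem pow_eq_chebyshevS (h : A.det = 1) (n : ℕ) :
    A ^ n = (S R (n - 1)).eval A.trace • A - (S R (n - 2)).eval A.trace • 1 := by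
  induction n with
  | zero => simp
  | succ n ih =>
    have hS : S R ((n + 1 : ℕ) - 1) = X * S R (n - 1) - S R (n - 2) := by
      rw [S_eq]
      push_cast
      ring_nf
    rw [pow_succ, ih, sub_mul, smul_mul_assoc, smul_mul_assoc, ← sq, sq_eq_trace_smul_sub_one h,
      one_mul, hS, show ((n + 1 : ℕ) : ℤ) - 2 = n - 1 by push_cast; ring]
    simp only [eval_sub, eval_mul, eval_X, smul_sub, smul_smul, sub_smul]
    module

end CommRing

theorem isElliptic_iff_abs_trace_lt_two {R : Type*} [CommRing R] [LinearOrder R]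
    [IsStrictOrderedRing R] {A : Matrix (Fin 2) (Fin 2) R} (h : A.det = 1) :
    A.IsElliptic ↔ |A.trace| < 2 := by
  rw [IsElliptic, discr_fin_two, h, mul_one, sub_neg, show (4 : R) = 2 ^ 2 by norm_num, sq_lt_sq,
    abs_two]

theorem pow_ne_one_of_trace_eq_ratCast {A : Matrix (Fin 2) (Fin 2) ℝ} (h : A.det = 1) {q : ℚ}
    (htr : A.trace = q) (hq : |q| < 2) (hint : ∀ k : ℤ, q ≠ k) {n : ℕ} (hn : 0 < n) :
    A ^ n ≠ 1 := by
  have hc : A 1 0 ≠ 0 :=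
    ((isElliptic_iff_abs_trace_lt_two h).2 (by rw [htr]; exact_mod_cast hq)).c_ne_zero
  intro hA
  obtain ⟨m, rfl⟩ : ∃ m, n = m + 1 := ⟨n - 1, by omega⟩
  have h10 := congrFun (congrFun (pow_eq_chebyshevS h (m + 1)) 1) 0
  rw [hA] at h10
  simp only [one_apply_ne (by decide : (1 : Fin 2) ≠ 0), sub_apply, smul_apply, smul_eq_mul,
    mul_zero, sub_zero, htr] at h10
  push_cast at h10
  rw [add_sub_cancel_right] at h10
  exact mul_ne_zero (Polynomial.Chebyshev.S_eval_ratCast_ne_zero hq hint m) hc h10.symm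

end Matrix

theorem UpperHalfPlane.existsUnique_smul_eq_self {g : GL (Fin 2) ℝ} (hpos : 0 < g.val.det)
    (hell : g.IsElliptic) : ∃! z : ℍ, g • z = z :=
  ⟨fixedPt g hell, (gl_smul_eq_self_iff_eq_fixedPt hpos hell).2 rfl,
    fun _ hz => (gl_smul_eq_self_iff_eq_fixedPt hpos hell).1 hz⟩

/-- The matrix `[[1,-2/3],[11/2,-8/3]]` has determinant 1 (so lies in `SL(2,ℝ)`)
and is an elliptic matrix of infinite order. -/
theorem matrix_elliptic_infinite_order :
    (!![1, -2/3; 11/2, -8/3] : Matrix (Fin 2) (Fin 2) ℝ).det = 1 ∧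
    ∃ E : SL(2, ℝ), (E : Matrix (Fin 2) (Fin 2) ℝ) = !![1, -2/3; 11/2, -8/3] ∧
      (∃! z : ℍ, E • z = z) ∧
      (∀ n : ℕ, 0 < n → E ^ n ≠ 1) := by
  have hdet : (!![1, -2/3; 11/2, -8/3] : Matrix (Fin 2) (Fin 2) ℝ).det = 1 := by
    norm_num [det_fin_two_of]
  have htr : (!![1, -2/3; 11/2, -8/3] : Matrix (Fin 2) (Fin 2) ℝ).trace = ((-5/3 : ℚ) : ℝ) := by
    norm_num [trace_fin_two_of]
  have hq : |(-5/3 : ℚ)| < 2 := by norm_num [abs_div]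
  have hint : ∀ k : ℤ, (-5/3 : ℚ) ≠ k := by
    intro k hk
    have : (-5 : ℤ) = 3 * k := by exact_mod_cast (by rw [← hk]; ring : (-5 : ℚ) = 3 * k)
    omega
  let E : SL(2, ℝ) := ⟨_, hdet⟩
  refine ⟨hdet, E, rfl, ?_, fun n hn hE => ?_⟩
  · refine existsUnique_smul_eq_self (g := E) (hdet ▸ one_pos) ?_
    exact (isElliptic_iff_abs_trace_lt_two hdet).2 (by rw [htr]; exact_mod_cast hq)
  · refine pow_ne_one_of_trace_eq_ratCast hdet htr hq hint hn ?_
    rw [← Matrix.SpecialLinearGroup.coe_pow E, hE, Matrix.SpecialLinearGroup.coe_one]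
end

section
/- For every N ∈ {1, 2, 3, 4}, the group Γ₀(N) is generated by the three matrices P₁ = [[1,1],[0,1]], W_N = [[1,0],[N,1]], and −I = [[−1,0],[0,−1]]. -/
/-!
Descent on the lower-left entry. Left multiplication by `P₁ⁿ` replaces the first column `(a, c)`
by `(a + n c, c)`, and by `W_N^m` replaces it by `(a, c + m N a)`. Taking balanced remainders first
gives `2 |a| ≤ |c|` and then `2 |c'| ≤ N |a|`, so `4 |c'| ≤ N |c|`: a strict decrease for `N ≤ 3`,
while for `N = 4` equality would make `a` and `c` both even, against `ad - bc = 1`. Once `c = 0`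
the matrix is `±P₁ⁿ`.
-/

open Matrix MatrixGroups CongruenceSubgroup

theorem Int.exists_two_mul_natAbs_add_mul_le (a : ℤ) {c : ℤ} (hc : c ≠ 0) :
    ∃ n : ℤ, 2 * (a + n * c).natAbs ≤ c.natAbs := by
  have hm : 0 < c.natAbs := Int.natAbs_pos.mpr hc
  refine ⟨-(a.bdiv c.natAbs * c.sign), ?_⟩
  have hr : a + -(a.bdiv c.natAbs * c.sign) * c = a.bmod c.natAbs := by
    rw [Int.bmod_eq_self_sub_bdiv_mul, ← Int.sign_mul_self_eq_natAbs]; ring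
  have := Int.le_bmod (x := a) hm
  have := Int.bmod_le (x := a) hm
  rw [hr]; omega

theorem exists_natAbs_add_mul_lt {N : ℕ} (hN : N ≤ 4) {a c : ℤ} (hac : IsCoprime a c)
    (hNc : (N : ℤ) ∣ c) (hc : c ≠ 0) :
    ∃ n m : ℤ, (c + m * N * (a + n * c)).natAbs < c.natAbs := by
  obtain ⟨n, hn⟩ := Int.exists_two_mul_natAbs_add_mul_le a hc
  have hac' : IsCoprime (a + n * c) c := hac.add_mul_right_left n
  by_cases ha' : a + n * c = 0
  · -- then `c = ±1`, and one more shift makes the top entry equal to `c`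
    rw [ha', isCoprime_zero_left, Int.isUnit_iff] at hac'
    have hN1 : N = 1 := by
      rcases hac' with rfl | rfl <;> simpa [Int.natCast_dvd] using hNc
    refine ⟨n + 1, -1, ?_⟩
    rw [hN1, show a + (n + 1) * c = c by linear_combination ha']
    simpa using hc
  · have hN0 : N ≠ 0 := by rintro rfl; exact hc (zero_dvd_iff.mp hNc)
    obtain ⟨m, hm⟩ := Int.exists_two_mul_natAbs_add_mul_le c
      (mul_ne_zero (Int.natCast_ne_zero.mpr hN0) ha')
    refine ⟨n, m, ?_⟩
    rw [mul_assoc m]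
    rw [Int.natAbs_mul, Int.natAbs_natCast] at hm
    by_contra! hge
    -- `4 |c| ≤ 2 N |a + n c| ≤ N |c|`, so `N = 4` and `2 |a + n c| = |c|`, which makes both even
    have hA : (a + n * c).natAbs ≠ 0 := Int.natAbs_ne_zero.mpr ha'
    have hNA : N * (a + n * c).natAbs ≤ 4 * (a + n * c).natAbs := Nat.mul_le_mul_right _ hN
    have hN4 : N = 4 := Nat.eq_of_mul_eq_mul_right (Nat.pos_of_ne_zero hA) (by omega)
    have h4c : 4 ∣ c.natAbs := Int.natCast_dvd.mp (hN4 ▸ hNc)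
    obtain ⟨h2a, h2c⟩ : 2 ∣ (a + n * c).natAbs ∧ 2 ∣ c.natAbs := by
      generalize (a + n * c).natAbs = A at *
      generalize c.natAbs = C at *
      omega
    have := Int.isUnit_iff.mp
      (hac'.isUnit_of_dvd' (Int.natCast_dvd.mpr h2a) (Int.natCast_dvd.mpr h2c))
    omega

namespace Matrix.SpecialLinearGroup

variable {ι R : Type*} [DecidableEq ι] [Fintype ι] [CommRing R]

lemma transvection_zsmul {i j : ι} (hij : i ≠ j) (m : ℤ) (b : R) :
    transvection hij (m • b) = transvection hij b ^ m :=
  map_zpow (MonoidHom.mk' (fun x : Multiplicative R ↦ transvection hij x.toAdd)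
    fun _ _ ↦ transvection_add hij _ _) (Multiplicative.ofAdd b) m

end Matrix.SpecialLinearGroup

open Matrix.SpecialLinearGroup (transvection transvection_coe transvection_zsmul)

def gamma0Generators (N : ℕ) : Set SL(2, ℤ) :=
  {transvection (zero_ne_one : (0 : Fin 2) ≠ 1) 1,
    transvection (one_ne_zero : (1 : Fin 2) ≠ 0) (N : ℤ), -1}

section gamma0Generators

variable (N : ℕ)

lemma transvection_zero_one_mem_closure (n : ℤ) :
    transvection (zero_ne_one : (0 : Fin 2) ≠ 1) n ∈ Subgroup.closure (gamma0Generators N) := by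
  rw [← mul_one n, ← smul_eq_mul, transvection_zsmul]
  exact zpow_mem (Subgroup.subset_closure (by simp [gamma0Generators])) n

lemma transvection_one_zero_mem_closure (m : ℤ) :
    transvection (one_ne_zero : (1 : Fin 2) ≠ 0) (m * N) ∈
      Subgroup.closure (gamma0Generators N) := by
  rw [← smul_eq_mul, transvection_zsmul]
  exact zpow_mem (Subgroup.subset_closure (by simp [gamma0Generators])) m

lemma neg_one_mem_closure_gamma0Generators : -1 ∈ Subgroup.closure (gamma0Generators N) :=
  Subgroup.subset_closure (by simp [gamma0Generators])

lemma closure_gamma0Generators_le_Gamma0 : Subgroup.closure (gamma0Generators N) ≤ Gamma0 N := by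
  rw [Subgroup.closure_le]
  rintro g (rfl | rfl | rfl) <;> simp [Gamma0_mem, transvection_coe]

lemma mem_closure_gamma0Generators_of_apply_one_zero_eq_zero {g : SL(2, ℤ)} (hc : g 1 0 = 0) :
    g ∈ Subgroup.closure (gamma0Generators N) := by
  have had : g 0 0 * g 1 1 = 1 := by
    have := g.det_coe
    rwa [det_fin_two, hc, mul_zero, sub_zero] at this
  rcases Int.eq_one_or_neg_one_of_mul_eq_one' had with ⟨ha, hd⟩ | ⟨ha, hd⟩
  · convert transvection_zero_one_mem_closure N (g 0 1)
    ext i j; fin_cases i <;> fin_cases j <;> simp [ha, hc, hd, transvection_coe]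
  · convert mul_mem (neg_one_mem_closure_gamma0Generators N)
      (transvection_zero_one_mem_closure N (-g 0 1))
    ext i j; fin_cases i <;> fin_cases j <;> simp [ha, hc, hd, transvection_coe]

end gamma0Generators

lemma mem_closure_gamma0Generators_of_mem_Gamma0 {N : ℕ} (hN : N ≤ 4) {g : SL(2, ℤ)}
    (hg : g ∈ Gamma0 N) : g ∈ Subgroup.closure (gamma0Generators N) := by
  induction h : (g 1 0).natAbs using Nat.strong_induction_on generalizing g with
  | _ k IH =>
  by_cases hc : g 1 0 = 0
  · exact mem_closure_gamma0Generators_of_apply_one_zero_eq_zero N hc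
  have hNc : (N : ℤ) ∣ g 1 0 := (ZMod.intCast_zmod_eq_zero_iff_dvd _ N).mp hg
  obtain ⟨n, m, hlt⟩ := exists_natAbs_add_mul_lt hN (g.isCoprime_col 0) hNc hc
  set u := transvection (zero_ne_one : (0 : Fin 2) ≠ 1) n
  set w := transvection (one_ne_zero : (1 : Fin 2) ≠ 0) (m * N)
  have hu := transvection_zero_one_mem_closure N n
  have hw := transvection_one_zero_mem_closure N m
  have hwug : (w * (u * g)) 1 0 = g 1 0 + m * N * (g 0 0 + n * g 1 0) := by
    simp [w, u, transvection_coe, Matrix.add_mul]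
  have hmem : w * (u * g) ∈ Subgroup.closure (gamma0Generators N) :=
    IH _ (h ▸ hwug ▸ hlt) (mul_mem (closure_gamma0Generators_le_Gamma0 N hw)
      (mul_mem (closure_gamma0Generators_le_Gamma0 N hu) hg)) rfl
  exact (Subgroup.mul_mem_cancel_left _ hu).mp ((Subgroup.mul_mem_cancel_left _ hw).mp hmem)

/-- For `N ∈ {1,2,3,4}`, the group `Γ₀(N)` is generated by
`P₁ = [[1,1],[0,1]]`, `W_N = [[1,0],[N,1]]` and `-I = [[-1,0],[0,-1]]`. -/
theorem gamma0_small_level_generated (N : ℕ) (hN : N ∈ ({1, 2, 3, 4} : Set ℕ)) :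
    Subgroup.closure
      ({⟨!![1, 1; 0, 1], by norm_num [Matrix.det_fin_two_of]⟩,
        ⟨!![1, 0; (N : ℤ), 1], by norm_num [Matrix.det_fin_two_of]⟩,
        ⟨!![-1, 0; 0, -1], by norm_num [Matrix.det_fin_two_of]⟩} : Set SL(2, ℤ)) =
      CongruenceSubgroup.Gamma0 N := by
  have hN4 : N ≤ 4 := by simp only [Set.mem_insert_iff, Set.mem_singleton_iff] at hN; omega
  convert le_antisymm (closure_gamma0Generators_le_Gamma0 N)
    fun _ ↦ mem_closure_gamma0Generators_of_mem_Gamma0 hN4 using 3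
  refine congrArg₂ insert ?_ (congrArg₂ insert ?_ (congrArg _ ?_)) <;>
    ext i j <;> fin_cases i <;> fin_cases j <;> simp [transvection_coe]
end

section
/- Let q be a prime, let a be an integer with gcd(a, q) = 1, let n be a positive integer, and let m be a nonnegative integer. Then cos^{(m)}(2πna/q) = (i^m/(q−1)) Σ_ψ τ(ψ̄) ψ(a) ψ(n) + δ_m(n), where the sum runs over all nontrivial Dirichlet characters ψ modulo q satisfying ψ(−1) = (−1)^m, and δ_m(n) = 0 if m is odd, while δ_m(n) = (−1)^{m/2}·(1 − (q/(q−1))·𝟙_{q ∤ n}) if m is even (here 𝟙_{q ∤ n} equals 1 if q does not divide n and 0 otherwise). -/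
/-!
Write `e(b) = exp(2πib/q)` and `c = an mod q`, so that
`cos⁽ᵐ⁾(2πna/q) = iᵐ (e(c) + (-1)ᵐ e(-c)) / 2`.
By orthogonality of characters, `∑_ψ τ(ψ̄) ψ(u) = φ(q) e(u)` for every unit `u`, and since
`(1 + ε ψ(-1)) / 2` is the indicator of `ψ(-1) = ε`, restricting to characters of parity `ε`
yields `φ(q) (e(u) + ε e(-u)) / 2`. Removing the trivial character, whose Gauss sum is `-1`,
produces the correction `δₘ`. If `q ∣ n`, then `ψ(n) = 0` for all `ψ` and both sides equal
`cos⁽ᵐ⁾(0)`.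
-/

open Complex Real

open scoped Classical

namespace DirichletCharacter

variable {N : ℕ}

theorem ite_apply_neg_one_eq (ψ : DirichletCharacter ℂ N) {ε : ℂ} (hε : ε ^ 2 = 1) :
    (if ψ (-1) = ε then 1 else 0) = (1 + ε * ψ (-1)) / 2 := by
  rcases sq_eq_one_iff.1 hε with rfl | rfl <;> rcases ψ.even_or_odd with h | h <;>
    simp only [Even, Odd] at h <;> norm_num [h]

variable [NeZero N]

theorem sum_inv_apply_mul_apply {u : ZMod N} (hu : IsUnit u) (b : ZMod N) :
    ∑ ψ : DirichletCharacter ℂ N, ψ⁻¹ b * ψ u = if b = u then (N.totient : ℂ) else 0 := by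
  simp only [MulChar.inv_apply, ← map_mul, sum_characters_eq]
  congr 1
  by_cases hb : IsUnit b
  · rw [Ring.inverse_mul_eq_iff_eq_mul _ _ _ hb, mul_one, eq_comm (a := u)]
  · nontriviality (ZMod N)
    rw [Ring.inverse_non_unit _ hb, zero_mul, eq_iff_iff]
    exact iff_of_false zero_ne_one (by rintro rfl; exact hb hu)

theorem sum_gaussSum_inv_mul_apply (e : AddChar (ZMod N) ℂ) {u : ZMod N} (hu : IsUnit u) :
    ∑ ψ : DirichletCharacter ℂ N, gaussSum ψ⁻¹ e * ψ u = N.totient * e u := by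
  simp only [gaussSum, Finset.sum_mul]
  rw [Finset.sum_comm]
  simp only [mul_right_comm _ (e _), ← Finset.sum_mul, sum_inv_apply_mul_apply hu]
  simp

theorem sum_ite_apply_neg_one_gaussSum_inv_mul_apply (e : AddChar (ZMod N) ℂ) {u : ZMod N}
    (hu : IsUnit u) {ε : ℂ} (hε : ε ^ 2 = 1) :
    ∑ ψ : DirichletCharacter ℂ N, (if ψ (-1) = ε then gaussSum ψ⁻¹ e * ψ u else 0) =
      N.totient / 2 * (e u + ε * e (-u)) := by
  have hsplit (ψ : DirichletCharacter ℂ N) :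
      (if ψ (-1) = ε then gaussSum ψ⁻¹ e * ψ u else 0) =
        (gaussSum ψ⁻¹ e * ψ u + ε * (gaussSum ψ⁻¹ e * ψ (-u))) / 2 := by
    rw [← boole_mul, ite_apply_neg_one_eq ψ hε, neg_eq_neg_one_mul u, map_mul]
    ring
  simp only [hsplit, ← Finset.sum_div, Finset.sum_add_distrib, ← Finset.mul_sum,
    sum_gaussSum_inv_mul_apply e hu, sum_gaussSum_inv_mul_apply e hu.neg]
  ring

theorem sum_ite_ne_one_apply_neg_one_gaussSum_inv_mul_apply {q : ℕ} [Fact q.Prime]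
    {e : AddChar (ZMod q) ℂ} (he : e ≠ 1) {u : ZMod q} (hu : u ≠ 0) {ε : ℂ} (hε : ε ^ 2 = 1) :
    ∑ ψ : DirichletCharacter ℂ q,
        (if ψ ≠ 1 ∧ ψ (-1) = ε then gaussSum ψ⁻¹ e * ψ u else 0) =
      ((q : ℂ) - 1) / 2 * (e u + ε * e (-u)) + if ε = 1 then 1 else 0 := by
  have hsplit (ψ : DirichletCharacter ℂ q) :
      (if ψ ≠ 1 ∧ ψ (-1) = ε then gaussSum ψ⁻¹ e * ψ u else 0) =
        (if ψ (-1) = ε then gaussSum ψ⁻¹ e * ψ u else 0) -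
          if ψ = 1 then (if ψ (-1) = ε then gaussSum ψ⁻¹ e * ψ u else 0) else 0 := by
    by_cases h : ψ = 1 <;> simp [h]
  have htrivial : (1 : DirichletCharacter ℂ q) (-1) = 1 := MulChar.one_apply isUnit_one.neg
  simp only [hsplit, Finset.sum_sub_distrib, Finset.sum_ite_eq', Finset.mem_univ, if_true,
    sum_ite_apply_neg_one_gaussSum_inv_mul_apply e hu.isUnit hε, htrivial, inv_one,
    gaussSum_one_left he, MulChar.one_apply hu.isUnit, Nat.totient_prime Fact.out,
    Nat.cast_sub (Fact.out : q.Prime).one_le, Nat.cast_one, eq_comm (a := (1 : ℂ))]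
  split_ifs <;> ring

end DirichletCharacter

theorem Complex.iteratedDeriv_cos_eq_exp (m : ℕ) (z : ℂ) :
    iteratedDeriv m cos z = I ^ m * (exp (I * z) + (-1) ^ m * exp (-I * z)) / 2 := by
  have hcos : cos = fun w => (exp (I * w) + exp (-I * w)) / 2 := by
    funext w
    simp only [Complex.cos, mul_comm I, neg_mul]
  rw [hcos, iteratedDeriv_div_const, iteratedDeriv_fun_add (by fun_prop) (by fun_prop),
    iteratedDeriv_cexp_const_mul, iteratedDeriv_cexp_const_mul, neg_pow]
  ring

theorem ZMod.gaussSum_inv_stdAddChar {N : ℕ} [NeZero N] (χ : MulChar (ZMod N) ℂ) :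
    gaussSum χ⁻¹ ZMod.stdAddChar =
      ∑ b : ZMod N, starRingEnd ℂ (χ b) * exp (2 * π * I * b.val / N) := by
  simp only [gaussSum, ZMod.stdAddChar_apply, ZMod.toCircle_apply, ← MulChar.star_apply',
    Complex.star_def]

theorem ZMod.stdAddChar_ne_one {N : ℕ} [NeZero N] [Nontrivial (ZMod N)] :
    (ZMod.stdAddChar : AddChar (ZMod N) ℂ) ≠ 1 := fun h =>
  one_ne_zero <| ZMod.injective_stdAddChar <| by
    rw [h, AddChar.one_apply, AddChar.map_zero_eq_one]

theorem cos_deriv_character_decomposition_general (q : ℕ) [Fact (Nat.Prime q)]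
    (a : ℤ) (ha : Int.gcd a q = 1) (n : ℕ) (m : ℕ) :
    iteratedDeriv m Complex.cos (2 * (π : ℂ) * n * a / q) =
      Complex.I ^ m / ((q : ℂ) - 1) *
        (∑ ψ : DirichletCharacter ℂ q,
          if ψ ≠ 1 ∧ ψ (-1) = (-1 : ℂ) ^ m then
            (∑ b : ZMod q,
              (starRingEnd ℂ) (ψ b) * Complex.exp (2 * (π : ℂ) * Complex.I * b.val / q)) *
              ψ (a : ZMod q) * ψ (n : ZMod q)
          else 0) +
      (if m % 2 = 1 then 0
       else (-1 : ℂ) ^ (m / 2) *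
         (1 - ((q : ℂ) / ((q : ℂ) - 1)) * (if ¬ q ∣ n then 1 else 0))) := by
  have hq1 : (q : ℂ) - 1 ≠ 0 := sub_ne_zero.2 (by exact_mod_cast (Fact.out : q.Prime).ne_one)
  set x : ℂ := 2 * π * n * a / q
  set c : ZMod q := (a : ZMod q) * n
  have hc : ZMod.stdAddChar c = exp (I * x) := by
    rw [show c = ((a * n : ℤ) : ZMod q) by push_cast; rfl, ZMod.stdAddChar_coe]
    congr 1; push_cast; ring
  have hc_neg : ZMod.stdAddChar (-c) = exp (-I * x) := by
    rw [AddChar.map_neg_eq_inv, hc, neg_mul, Complex.exp_neg]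
  have hsum (ψ : DirichletCharacter ℂ q) :
      (∑ b : ZMod q, starRingEnd ℂ (ψ b) * exp (2 * π * I * b.val / q)) * ψ a * ψ n =
        gaussSum ψ⁻¹ ZMod.stdAddChar * ψ c := by
    rw [ZMod.gaussSum_inv_stdAddChar, mul_assoc, ← map_mul]
  simp only [hsum, Complex.iteratedDeriv_cos_eq_exp, ← hc, ← hc_neg]
  by_cases hqn : q ∣ n
  · have hc0 : c = 0 := by simp [c, (ZMod.natCast_eq_zero_iff n q).2 hqn]
    simp only [hc0, MulChar.map_zero, mul_zero, ite_self, Finset.sum_const_zero, neg_zero,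
      AddChar.map_zero_eq_one, hqn, not_true, if_false]
    rcases Nat.even_or_odd' m with ⟨k, rfl | rfl⟩ <;> norm_num [pow_mul, pow_succ]
  · have hc0 : c ≠ 0 := mul_ne_zero (ZMod.ne_zero_of_gcd_eq_one Fact.out ha)
      (mt (ZMod.natCast_eq_zero_iff n q).1 hqn)
    rw [DirichletCharacter.sum_ite_ne_one_apply_neg_one_gaussSum_inv_mul_apply
      ZMod.stdAddChar_ne_one hc0 (by rw [pow_right_comm, neg_one_sq, one_pow])]
    rcases Nat.even_or_odd' m with ⟨k, rfl | rfl⟩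
    · norm_num [pow_mul, hqn]
      field_simp
      ring
    · norm_num [pow_mul, pow_succ]
      field_simp

/-- The identity expressing `cos⁽ᵐ⁾(2πna/q)` in terms of twists by the nontrivial
Dirichlet characters modulo a prime `q` of parity `(-1)^m`:
`cos⁽ᵐ⁾(2πna/q) = (iᵐ/(q-1)) ∑_ψ τ(ψ̄) ψ(a) ψ(n) + δₘ(n)`,
where `τ(ψ̄) = ∑_b ψ̄(b) exp(2πib/q)` is the Gauss sum of the conjugate character,
`δₘ(n) = 0` for `m` odd and `δₘ(n) = (-1)^{m/2}(1 - (q/(q-1))·𝟙_{q ∤ n})` for `m` even. -/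
theorem cos_deriv_character_decomposition (q : ℕ) [Fact (Nat.Prime q)]
    (a : ℤ) (ha : Int.gcd a q = 1) (n : ℕ) (hn : 0 < n) (m : ℕ) :
    iteratedDeriv m Complex.cos (2 * (π : ℂ) * n * a / q) =
      Complex.I ^ m / ((q : ℂ) - 1) *
        (∑ ψ : DirichletCharacter ℂ q,
          if ψ ≠ 1 ∧ ψ (-1) = (-1 : ℂ) ^ m then
            (∑ b : ZMod q,
              (starRingEnd ℂ) (ψ b) * Complex.exp (2 * (π : ℂ) * Complex.I * b.val / q)) *
              ψ (a : ZMod q) * ψ (n : ZMod q)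
          else 0) +
      (if m % 2 = 1 then 0
       else (-1 : ℂ) ^ (m / 2) *
         (1 - ((q : ℂ) / ((q : ℂ) - 1)) * (if ¬ q ∣ n then 1 else 0))) :=
  cos_deriv_character_decomposition_general q a ha n m
end

section
/- Let θ be an irrational real number and let c : 𝒟 → ℂ be a continuous function on the open unit disc 𝒟 = {z ∈ ℂ : |z| < 1} satisfying c(z) = e^{iπmθ}·c(e^{2πimθ}z) for all integers m and all z ∈ 𝒟. Then c = 0. -/
open Complex Real

/-!
Fix `z` in the disc and put `F t = e^{iπt} c(e^{2πit} z)`. This is a continuous function on `ℝ`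
with period `2` and, by the hypothesis with `m = 1` applied at `e^{2πit} z`, with period `θ`.
Since `θ / 2` is irrational, the group `ℤθ + 2ℤ` is dense, so `F` is constant. Comparing
`F 1 = -c z` with `F 0 = c z` gives `c z = 0`.
-/

theorem Function.Periodic.apply_eq_apply_zero_of_irrational_div {X : Type*}
    [TopologicalSpace X] [T2Space X] {f : ℝ → X} (hf : Continuous f) {a b : ℝ}
    (ha : Function.Periodic f a) (hb : Function.Periodic f b)
    (hab : Irrational (a / b)) (x : ℝ) : f x = f 0 := by
  have hperiod : ∀ p ∈ AddSubgroup.closure {a, b}, Function.Periodic f p := by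
    intro p hp
    induction hp using AddSubgroup.closure_induction with
    | mem p hp =>
      rcases hp with rfl | rfl
      · exact ha
      · exact hb
    | zero => exact fun t ↦ by rw [add_zero]
    | add p q _ _ hp hq => exact hp.add_period hq
    | neg p _ hp => exact hp.neg
  have hdense := dense_addSubgroupClosure_pair_iff.mpr hab
  exact congrFun (hf.ext_on hdense continuous_const fun p hp ↦ (hperiod p hp).eq) x

theorem norm_exp_two_pi_I_mul_ofReal (t : ℝ) : ‖exp (2 * π * I * t)‖ = 1 := by
  rw [show 2 * π * I * t = ((2 * π * t : ℝ) : ℂ) * I by push_cast; ring]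
  exact norm_exp_ofReal_mul_I _

theorem exp_two_pi_I_mul_ofReal_mul_mem_ball {z : ℂ} {r : ℝ} (hz : z ∈ Metric.ball (0 : ℂ) r)
    (t : ℝ) : exp (2 * π * I * t) * z ∈ Metric.ball (0 : ℂ) r := by
  rwa [mem_ball_zero_iff, norm_mul, norm_exp_two_pi_I_mul_ofReal, one_mul, ← mem_ball_zero_iff]

/-- If `θ` is irrational and a continuous function `c` on the open unit disc satisfies
`c(z) = e^{iπmθ} c(e^{2πimθ} z)` for all integers `m`, then `c = 0`. -/
theorem rotation_invariant_function_zero (θ : ℝ) (hθ : Irrational θ)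
    (c : ℂ → ℂ) (hc : ContinuousOn c (Metric.ball (0 : ℂ) 1))
    (h : ∀ m : ℤ, ∀ z ∈ Metric.ball (0 : ℂ) 1,
      c z = Complex.exp (Complex.I * (π : ℂ) * m * θ) *
        c (Complex.exp (2 * (π : ℂ) * Complex.I * m * θ) * z)) :
    ∀ z ∈ Metric.ball (0 : ℂ) 1, c z = 0 := by
  intro z hz
  set F : ℝ → ℂ := fun t ↦ exp (I * π * t) * c (exp (2 * π * I * t) * z)
  have hF : Continuous F := by
    refine (Complex.continuous_exp.comp (by fun_prop)).mul (hc.comp_continuous (by fun_prop) ?_)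
    exact exp_two_pi_I_mul_ofReal_mul_mem_ball hz
  have hF2 : Function.Periodic F 2 := fun t ↦ by
    have e1 : I * π * ↑(t + 2) = I * π * t + 2 * π * I := by push_cast; ring
    have e2 : 2 * π * I * ↑(t + 2) = 2 * π * I * t + 2 * π * I + 2 * π * I := by push_cast; ring
    simp only [F, e1, e2, Complex.exp_add, exp_two_pi_mul_I, mul_one]
  have hFθ : Function.Periodic F θ := fun t ↦ by
    have hrot := h 1 _ (exp_two_pi_I_mul_ofReal_mul_mem_ball hz t)
    have e1 : I * π * ↑(t + θ) = I * π * θ + I * π * t := by push_cast; ring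
    have e2 : 2 * π * I * ↑(t + θ) = 2 * π * I * θ + 2 * π * I * t := by push_cast; ring
    simp only [Int.cast_one, mul_one] at hrot
    simp only [F, e1, e2, Complex.exp_add, hrot]
    ring_nf
  have hF1 := hFθ.apply_eq_apply_zero_of_irrational_div hF hF2 (hθ.div_natCast two_ne_zero) 1
  have hπ : exp (I * π) = -1 := by rw [mul_comm]; exact exp_pi_mul_I
  simp only [F, ofReal_one, mul_one, ofReal_zero, mul_zero, Complex.exp_zero, one_mul, hπ,
    exp_two_pi_mul_I] at hF1
  linear_combination (-1 / 2 : ℂ) * hF1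
end
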